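/- arXiv:2206.01318 — 3 statements merged into one kernel-verified Lean document; each statement's English description precedes it below -/
import Mathlib

section
/- Let y_c ∈ ℝ, c ∈ ℂ, and let U_s(y) - c = Σ_{n≥1} c_n (y - y_c)^n / n! be a convergent power series on |y - y_c| < R with c_1 = U_s'(y_c) ≠ 0. Let (a_n)_{n≥0} and (b_n)_{n≥1} be complex sequences such that the power series Σ a_n Y^n and Σ b_n Y^n have positive radius of convergence, and suppose that ψ(y) := Σ_{n≥0} a_n (y - y_c)^n + log(y - y_c) · Σ_{n≥1} b_n (y - y_c)^n satisfies (U_s(y) - c) ψ''(y) - U_s''(y) ψ(y) = 0 for all y in some interval (y_c, y_c + σ) with σ > 0. Then U_s'(y_c) b_1 = U_s''(y_c) a_0, i.e. c_1 b_1 = c_2 a_0. -/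
open FormalMultilinearSeries Filter Topology Complex

section helpers

lemma rlog_hasFPSOB (u : ℕ → ℂ) (t : ℝ) (ht : 0 < t)
    (hs : Summable fun n => u n * (t : ℂ) ^ n) :
    HasFPowerSeriesOnBall (ofScalarsSum u) (ofScalars ℂ u) 0 (ENNReal.ofReal t) := by
  have hn : Summable fun n => ‖u n * (t : ℂ) ^ n‖ := summable_norm_iff.mpr hs
  have hrad : ENNReal.ofReal t ≤ (ofScalars ℂ u).radius := by
    have := (ofScalars ℂ u).le_radius_of_summable_norm (r := t.toNNReal) ?_
    · simpa [ENNReal.ofReal] using this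
    · refine hn.congr fun n => ?_
      rw [norm_mul, norm_pow, ofScalars_norm, Real.coe_toNNReal _ ht.le, Complex.norm_real,
        Real.norm_eq_abs, abs_of_pos ht]
  have hpos : 0 < (ofScalars ℂ u).radius := lt_of_lt_of_le (by simpa using ht) hrad
  exact ((ofScalars ℂ u).hasFPowerSeriesOnBall hpos).mono (by simpa using ht) hrad

lemma rlog_sum_eq (u : ℕ → ℂ) (z : ℂ) : ofScalarsSum u z = ∑' n, u n * z ^ n := by
  rw [ofScalars_sum_eq]; simp [smul_eq_mul]

lemma rlog_mem_eball {z : ℂ} {t : ℝ} (h : ‖z‖ < t) :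
    z ∈ Metric.eball (0 : ℂ) (ENNReal.ofReal t) := by
  rw [EMetric.mem_ball, edist_dist, dist_zero_right]
  exact (ENNReal.ofReal_lt_ofReal_iff ((norm_nonneg z).trans_lt h)).mpr h

lemma rlog_hasDerivAt_comp {f : ℂ → ℂ} {f' : ℂ} (y_c y : ℝ)
    (hf : HasDerivAt f f' ((y : ℂ) - (y_c : ℂ))) :
    HasDerivAt (fun t : ℝ => f ((t : ℂ) - (y_c : ℂ))) f' y := by
  have h1 : HasDerivAt (fun z : ℂ => f (z - (y_c : ℂ))) f' (y : ℂ) := by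
    simpa [Function.comp_def] using hf.comp (y : ℂ) ((hasDerivAt_id ((y : ℂ))).sub_const (y_c : ℂ))
  exact h1.comp_ofReal

lemma rlog_sum_zero (u : ℕ → ℂ) : ofScalarsSum u (0 : ℂ) = u 0 := by
  simp

lemma rlog_hasDerivAt_zero (u : ℕ → ℂ) (t : ℝ) (ht : 0 < t)
    (hs : Summable fun n => u n * (t : ℂ) ^ n) :
    HasDerivAt (ofScalarsSum u : ℂ → ℂ) (u 1) 0 := by
  have h := (rlog_hasFPSOB u t ht hs).hasFPowerSeriesAt.hasDerivAt
  have hc : (ofScalars ℂ u 1 fun _ => 1) = u 1 := by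
    rw [ofScalars_apply_eq]; simp
  rwa [hc] at h

lemma rlog_deriv_zero (u : ℕ → ℂ) (t : ℝ) (ht : 0 < t)
    (hs : Summable fun n => u n * (t : ℂ) ^ n) :
    deriv (ofScalarsSum u) 0 = u 1 := (rlog_hasDerivAt_zero u t ht hs).deriv

lemma rlog_deriv2_zero (u : ℕ → ℂ) (t : ℝ) (ht : 0 < t)
    (hs : Summable fun n => u n * (t : ℂ) ^ n) :
    deriv (deriv (ofScalarsSum u)) 0 = 2 * u 2 := by
  have h2 := (rlog_hasFPSOB u t ht hs).factorial_smul (1 : ℂ) 2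
  have h3 : iteratedDeriv 2 (ofScalarsSum u : ℂ → ℂ) (0 : ℂ) =
      deriv (deriv (ofScalarsSum u)) 0 := by
    rw [iteratedDeriv_succ, iteratedDeriv_one]
  rw [← iteratedDeriv_eq_iteratedFDeriv] at h2
  rw [← h3, ← h2, ofScalars_apply_eq]
  norm_num [Nat.factorial]

end helpers



/-- If `ψ(y) = Σ_{n≥0} aₙ (y - y_c)ⁿ + log(y - y_c) Σ_{n≥1} bₙ (y - y_c)ⁿ`
solves the Rayleigh equation `(U_s - c) ψ'' - U_s'' ψ = 0` on `(y_c, y_c + σ)`,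
where `U_s(y) - c = Σ_{n≥1} cₙ (y - y_c)ⁿ/n!` with `c₁ = U_s'(y_c) ≠ 0`, then
`c₁ b₁ = c₂ a₀`, i.e. `U_s'(y_c) b₁ = U_s''(y_c) a₀`. -/
theorem rayleigh_log_series_first_coefficient
    (y_c : ℝ) (c : ℂ) (R : ℝ) (hR : 0 < R)
    (U : ℝ → ℂ) (cs : ℕ → ℂ) (hc0 : cs 0 = 0) (hc1ne : cs 1 ≠ 0)
    (hU : ∀ y : ℝ, |y - y_c| < R →
      HasSum (fun n : ℕ => cs n * ((y : ℂ) - (y_c : ℂ)) ^ n / (Nat.factorial n : ℂ))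
        (U y - c))
    (aa bb : ℕ → ℂ) (hb0 : bb 0 = 0)
    (r : ℝ) (hr : 0 < r)
    (hconv : ∀ Y : ℂ, ‖Y‖ < r →
      Summable (fun n : ℕ => aa n * Y ^ n) ∧ Summable (fun n : ℕ => bb n * Y ^ n))
    (σ : ℝ) (hσ : 0 < σ)
    (heq : ∀ y : ℝ, y_c < y → y < y_c + σ →
      (U y - c) *
          deriv (deriv (fun t : ℝ =>
            (∑' n : ℕ, aa n * ((t : ℂ) - (y_c : ℂ)) ^ n)
              + (Real.log (t - y_c) : ℂ)
                  * (∑' n : ℕ, bb n * ((t : ℂ) - (y_c : ℂ)) ^ n))) y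
        - deriv (deriv U) y *
          ((∑' n : ℕ, aa n * ((y : ℂ) - (y_c : ℂ)) ^ n)
              + (Real.log (y - y_c) : ℂ)
                  * (∑' n : ℕ, bb n * ((y : ℂ) - (y_c : ℂ)) ^ n)) = 0) :
    cs 1 * bb 1 = cs 2 * aa 0 := by
  have hr2 : (0:ℝ) < r / 2 := by linarith
  have hR2 : (0:ℝ) < R / 2 := by linarith
  set u : ℕ → ℂ := fun n => cs n / (n.factorial : ℂ) with hu
  -- norm of real-cast differences
  have hnormZ : ∀ t : ℝ, ‖((t:ℂ) - (y_c:ℂ))‖ = |t - y_c| := fun t => by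
    rw [← Complex.ofReal_sub, Complex.norm_real, Real.norm_eq_abs]
  -- summability
  have hsumW : Summable fun n => u n * ((R/2 : ℝ) : ℂ) ^ n := by
    have habs : |y_c + R/2 - y_c| < R := by
      rw [show y_c + R/2 - y_c = R/2 by ring, abs_of_pos hR2]; linarith
    have h := (hU (y_c + R/2) habs).summable
    refine h.congr fun n => ?_
    have hz : ((y_c + R/2 : ℝ) : ℂ) - (y_c:ℂ) = ((R/2 : ℝ) : ℂ) := by push_cast; ring
    rw [hz, hu]; ring
  have hsumF : Summable fun n => aa n * ((r/2 : ℝ) : ℂ) ^ n := by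
    refine (hconv _ ?_).1
    rw [Complex.norm_real, Real.norm_eq_abs, abs_of_pos hr2]; linarith
  have hsumG : Summable fun n => bb n * ((r/2 : ℝ) : ℂ) ^ n := by
    refine (hconv _ ?_).2
    rw [Complex.norm_real, Real.norm_eq_abs, abs_of_pos hr2]; linarith
  set F : ℂ → ℂ := ofScalarsSum aa with hF
  set G : ℂ → ℂ := ofScalarsSum bb with hG
  set W : ℂ → ℂ := ofScalarsSum u with hW
  have hFb := rlog_hasFPSOB aa (r/2) hr2 hsumF
  have hGb := rlog_hasFPSOB bb (r/2) hr2 hsumG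
  have hWb := rlog_hasFPSOB u (R/2) hR2 hsumW
  have hFan : AnalyticOnNhd ℂ F (EMetric.ball 0 (ENNReal.ofReal (r/2))) := hFb.analyticOnNhd
  have hGan : AnalyticOnNhd ℂ G (EMetric.ball 0 (ENNReal.ofReal (r/2))) := hGb.analyticOnNhd
  have hWan : AnalyticOnNhd ℂ W (EMetric.ball 0 (ENNReal.ofReal (R/2))) := hWb.analyticOnNhd
  have hmemF : ∀ t : ℝ, |t - y_c| < r/2 →
      ((t:ℂ) - (y_c:ℂ)) ∈ EMetric.ball (0:ℂ) (ENNReal.ofReal (r/2)) := fun t ht =>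
    rlog_mem_eball (by rw [hnormZ]; exact ht)
  have hmemW : ∀ t : ℝ, |t - y_c| < R/2 →
      ((t:ℂ) - (y_c:ℂ)) ∈ EMetric.ball (0:ℂ) (ENNReal.ofReal (R/2)) := fun t ht =>
    rlog_mem_eball (by rw [hnormZ]; exact ht)
  have hmem0F : (0:ℂ) ∈ EMetric.ball (0:ℂ) (ENNReal.ofReal (r/2)) :=
    rlog_mem_eball (by simpa using hr2)
  have hmem0W : (0:ℂ) ∈ EMetric.ball (0:ℂ) (ENNReal.ofReal (R/2)) :=
    rlog_mem_eball (by simpa using hR2)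
  -- U representation
  have hUrep : ∀ y : ℝ, |y - y_c| < R → U y - c = W ((y:ℂ) - (y_c:ℂ)) := by
    intro y hy
    have h := (hU y hy).tsum_eq
    rw [hW, rlog_sum_eq, ← h]
    exact tsum_congr fun n => by rw [hu]; ring
  -- second derivative of U
  have hU''eq : ∀ y : ℝ, |y - y_c| < R/2 →
      deriv (deriv U) y = deriv (deriv W) ((y:ℂ) - (y_c:ℂ)) := by
    intro y hy
    have hball : ∀ᶠ t in 𝓝 y, |t - y_c| < R/2 := by
      have : Metric.ball y_c (R/2) ∈ 𝓝 y := Metric.isOpen_ball.mem_nhds (by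
        simpa [Real.dist_eq] using hy)
      filter_upwards [this] with t ht
      simpa [Real.dist_eq] using ht
    have hU'eq : ∀ t : ℝ, |t - y_c| < R/2 → deriv U t = deriv W ((t:ℂ) - (y_c:ℂ)) := by
      intro t ht
      have hWd : HasDerivAt W (deriv W ((t:ℂ) - (y_c:ℂ))) ((t:ℂ) - (y_c:ℂ)) :=
        ((hWan _ (hmemW t ht)).differentiableAt).hasDerivAt
      have h1 : HasDerivAt (fun s : ℝ => c + W ((s:ℂ) - (y_c:ℂ)))
          (deriv W ((t:ℂ) - (y_c:ℂ))) t := (rlog_hasDerivAt_comp y_c t hWd).const_add c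
      have hloc : U =ᶠ[𝓝 t] fun s : ℝ => c + W ((s:ℂ) - (y_c:ℂ)) := by
        have hballR : Metric.ball y_c R ∈ 𝓝 t := Metric.isOpen_ball.mem_nhds (by
          simp only [Metric.mem_ball, Real.dist_eq]; linarith [abs_nonneg (t - y_c), ht])
        filter_upwards [hballR] with s hs
        have := hUrep s (by simpa [Real.dist_eq] using hs)
        linear_combination this
      exact (h1.congr_of_eventuallyEq hloc).deriv
    have hev : deriv U =ᶠ[𝓝 y] fun t : ℝ => deriv W ((t:ℂ) - (y_c:ℂ)) := by
      filter_upwards [hball] with t ht; exact hU'eq t ht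
    rw [hev.deriv_eq]
    have hW'd : HasDerivAt (deriv W) (deriv (deriv W) ((y:ℂ) - (y_c:ℂ))) ((y:ℂ) - (y_c:ℂ)) :=
      ((hWan.deriv _ (hmemW y hy)).differentiableAt).hasDerivAt
    exact (rlog_hasDerivAt_comp y_c y hW'd).deriv
  -- rewrite the tsum functions in heq
  have hFz : ∀ z : ℂ, (∑' n : ℕ, aa n * z ^ n) = F z := fun z => (rlog_sum_eq aa z).symm
  have hGz : ∀ z : ℂ, (∑' n : ℕ, bb n * z ^ n) = G z := fun z => (rlog_sum_eq bb z).symm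
  have heq' : ∀ y : ℝ, y_c < y → y < y_c + σ →
      (U y - c) *
          deriv (deriv (fun t : ℝ =>
            F ((t:ℂ) - (y_c:ℂ)) + (Real.log (t - y_c) : ℂ) * G ((t:ℂ) - (y_c:ℂ)))) y
        - deriv (deriv U) y *
          (F ((y:ℂ) - (y_c:ℂ)) + (Real.log (y - y_c) : ℂ) * G ((y:ℂ) - (y_c:ℂ))) = 0 := by
    intro y h1 h2
    have := heq y h1 h2
    simpa only [hFz, hGz] using this
  -- first derivative of ψ on the interval
  have hψ1 : ∀ t : ℝ, t ∈ Set.Ioo y_c (y_c + r/2) →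
      HasDerivAt (fun s : ℝ =>
          F ((s:ℂ) - (y_c:ℂ)) + (Real.log (s - y_c) : ℂ) * G ((s:ℂ) - (y_c:ℂ)))
        (deriv F ((t:ℂ) - (y_c:ℂ)) +
          (((t:ℂ) - (y_c:ℂ))⁻¹ * G ((t:ℂ) - (y_c:ℂ)) +
            (Real.log (t - y_c) : ℂ) * deriv G ((t:ℂ) - (y_c:ℂ)))) t := by
    intro t ht
    have habs : |t - y_c| < r/2 := by
      rw [abs_of_pos (by linarith [ht.1])]; linarith [ht.2]
    have hFd : HasDerivAt (fun s : ℝ => F ((s:ℂ) - (y_c:ℂ)))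
        (deriv F ((t:ℂ) - (y_c:ℂ))) t :=
      rlog_hasDerivAt_comp y_c t ((hFan _ (hmemF t habs)).differentiableAt).hasDerivAt
    have hGd : HasDerivAt (fun s : ℝ => G ((s:ℂ) - (y_c:ℂ)))
        (deriv G ((t:ℂ) - (y_c:ℂ))) t :=
      rlog_hasDerivAt_comp y_c t ((hGan _ (hmemF t habs)).differentiableAt).hasDerivAt
    have hlt : (0:ℝ) < t - y_c := by linarith [ht.1]
    have hlog : HasDerivAt (fun s : ℝ => Real.log (s - y_c)) (t - y_c)⁻¹ t := by
      simpa [Function.comp_def] using (Real.hasDerivAt_log (ne_of_gt hlt)).comp t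
        ((hasDerivAt_id t).sub_const y_c)
    have hlogC : HasDerivAt (fun s : ℝ => ((Real.log (s - y_c) : ℝ) : ℂ))
        (((t:ℂ) - (y_c:ℂ))⁻¹) t := by
      have h := hlog.ofReal_comp
      convert h using 1
      push_cast
      ring
    exact hFd.add (hlogC.mul hGd)
  -- second derivative of ψ on the interval
  have hψ2eq : ∀ y : ℝ, y ∈ Set.Ioo y_c (y_c + r/2) →
      deriv (deriv (fun t : ℝ =>
          F ((t:ℂ) - (y_c:ℂ)) + (Real.log (t - y_c) : ℂ) * G ((t:ℂ) - (y_c:ℂ)))) y =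
      deriv (deriv F) ((y:ℂ) - (y_c:ℂ)) +
        ((-(((y:ℂ) - (y_c:ℂ)) ^ 2)⁻¹ * G ((y:ℂ) - (y_c:ℂ)) +
            ((y:ℂ) - (y_c:ℂ))⁻¹ * deriv G ((y:ℂ) - (y_c:ℂ))) +
          (((y:ℂ) - (y_c:ℂ))⁻¹ * deriv G ((y:ℂ) - (y_c:ℂ)) +
            (Real.log (y - y_c) : ℂ) * deriv (deriv G) ((y:ℂ) - (y_c:ℂ)))) := by
    intro y hy
    have habs : |y - y_c| < r/2 := by
      rw [abs_of_pos (by linarith [hy.1])]; linarith [hy.2]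
    have hev : deriv (fun t : ℝ =>
        F ((t:ℂ) - (y_c:ℂ)) + (Real.log (t - y_c) : ℂ) * G ((t:ℂ) - (y_c:ℂ)))
        =ᶠ[𝓝 y] fun s : ℝ =>
          deriv F ((s:ℂ) - (y_c:ℂ)) +
            (((s:ℂ) - (y_c:ℂ))⁻¹ * G ((s:ℂ) - (y_c:ℂ)) +
              (Real.log (s - y_c) : ℂ) * deriv G ((s:ℂ) - (y_c:ℂ))) := by
      filter_upwards [Ioo_mem_nhds hy.1 hy.2] with t ht
      exact (hψ1 t ht).deriv
    rw [hev.deriv_eq]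
    have hlt : (0:ℝ) < y - y_c := by linarith [hy.1]
    have hZne : ((y:ℂ) - (y_c:ℂ)) ≠ 0 := by
      rw [← Complex.ofReal_sub]
      exact_mod_cast ne_of_gt hlt
    have hF'd : HasDerivAt (fun s : ℝ => deriv F ((s:ℂ) - (y_c:ℂ)))
        (deriv (deriv F) ((y:ℂ) - (y_c:ℂ))) y :=
      rlog_hasDerivAt_comp y_c y ((hFan.deriv _ (hmemF y habs)).differentiableAt).hasDerivAt
    have hG'd : HasDerivAt (fun s : ℝ => deriv G ((s:ℂ) - (y_c:ℂ)))
        (deriv (deriv G) ((y:ℂ) - (y_c:ℂ))) y :=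
      rlog_hasDerivAt_comp y_c y ((hGan.deriv _ (hmemF y habs)).differentiableAt).hasDerivAt
    have hGd : HasDerivAt (fun s : ℝ => G ((s:ℂ) - (y_c:ℂ)))
        (deriv G ((y:ℂ) - (y_c:ℂ))) y :=
      rlog_hasDerivAt_comp y_c y ((hGan _ (hmemF y habs)).differentiableAt).hasDerivAt
    have hinv : HasDerivAt (fun s : ℝ => ((s:ℂ) - (y_c:ℂ))⁻¹)
        (-((((y:ℂ) - (y_c:ℂ))) ^ 2)⁻¹) y :=
      rlog_hasDerivAt_comp y_c y (hasDerivAt_inv hZne)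
    have hlog : HasDerivAt (fun s : ℝ => Real.log (s - y_c)) (y - y_c)⁻¹ y := by
      simpa [Function.comp_def] using (Real.hasDerivAt_log (ne_of_gt hlt)).comp y
        ((hasDerivAt_id y).sub_const y_c)
    have hlogC : HasDerivAt (fun s : ℝ => ((Real.log (s - y_c) : ℝ) : ℂ))
        (((y:ℂ) - (y_c:ℂ))⁻¹) y := by
      have h := hlog.ofReal_comp
      convert h using 1
      push_cast
      ring
    exact (hF'd.add ((hinv.mul hGd).add (hlogC.mul hG'd))).deriv
  -- the combined function vanishes on a right neighbourhood
  set δ : ℝ := min (min (r/2) (R/2)) σ with hδ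
  have hδpos : 0 < δ := lt_min (lt_min hr2 hR2) hσ
  have hkey : ∀ y : ℝ, y ∈ Set.Ioo y_c (y_c + δ) →
      W ((y:ℂ) - (y_c:ℂ)) *
        (deriv (deriv F) ((y:ℂ) - (y_c:ℂ)) +
          ((-(((y:ℂ) - (y_c:ℂ)) ^ 2)⁻¹ * G ((y:ℂ) - (y_c:ℂ)) +
              ((y:ℂ) - (y_c:ℂ))⁻¹ * deriv G ((y:ℂ) - (y_c:ℂ))) +
            (((y:ℂ) - (y_c:ℂ))⁻¹ * deriv G ((y:ℂ) - (y_c:ℂ)) +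
              (Real.log (y - y_c) : ℂ) * deriv (deriv G) ((y:ℂ) - (y_c:ℂ)))))
      - deriv (deriv W) ((y:ℂ) - (y_c:ℂ)) *
          (F ((y:ℂ) - (y_c:ℂ)) + (Real.log (y - y_c) : ℂ) * G ((y:ℂ) - (y_c:ℂ))) = 0 := by
    intro y hy
    have h1 : y_c < y := hy.1
    have hyr : y ∈ Set.Ioo y_c (y_c + r/2) :=
      ⟨h1, by have := hy.2; have : δ ≤ r/2 := le_trans (min_le_left _ _) (min_le_left _ _);
              linarith [hy.2]⟩
    have habsR : |y - y_c| < R/2 := by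
      rw [abs_of_pos (by linarith)]
      have : δ ≤ R/2 := le_trans (min_le_left _ _) (min_le_right _ _)
      linarith [hy.2]
    have habsRR : |y - y_c| < R := by
      have := abs_lt.mp habsR
      rw [abs_lt]; constructor <;> linarith
    have h2 : y < y_c + σ := by
      have : δ ≤ σ := min_le_right _ _
      linarith [hy.2]
    have h := heq' y h1 h2
    rw [hψ2eq y hyr, hU''eq y habsR, hUrep y habsRR] at h
    exact h
  -- limits
  have hZ0 : Tendsto (fun y : ℝ => ((y:ℂ) - (y_c:ℂ))) (𝓝[>] y_c) (𝓝 0) := by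
    have hcont : Tendsto (fun y : ℝ => ((y:ℂ) - (y_c:ℂ))) (𝓝 y_c) (𝓝 0) := by
      have := (Complex.continuous_ofReal.tendsto y_c).sub (tendsto_const_nhds (x := (y_c:ℂ)))
      simpa using this
    exact hcont.mono_left nhdsWithin_le_nhds
  have hZne' : Tendsto (fun y : ℝ => ((y:ℂ) - (y_c:ℂ))) (𝓝[>] y_c) (𝓝[≠] 0) := by
    refine tendsto_nhdsWithin_of_tendsto_nhds_of_eventually_within _ hZ0 ?_
    filter_upwards [eventually_mem_nhdsWithin] with y hy
    have : (y:ℝ) - y_c > 0 := sub_pos.mpr hy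
    simp only [Set.mem_compl_iff, Set.mem_singleton_iff]
    rw [← Complex.ofReal_sub]
    exact_mod_cast ne_of_gt this
  have hW0 : W 0 = 0 := by rw [hW, rlog_sum_zero, hu]; simp [hc0]
  have hG0 : G 0 = 0 := by rw [hG, rlog_sum_zero, hb0]
  have hF0 : F 0 = aa 0 := by rw [hF, rlog_sum_zero]
  have hWslope : Tendsto (fun z : ℂ => W z / z) (𝓝[≠] 0) (𝓝 (cs 1)) := by
    have hd : HasDerivAt W (cs 1) 0 := by
      have := rlog_hasDerivAt_zero u (R/2) hR2 hsumW
      rw [hu] at this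
      simpa [Nat.factorial] using this
    rw [hasDerivAt_iff_tendsto_slope] at hd
    refine hd.congr fun z => ?_
    rw [slope_def_field, hW0]
    simp [div_eq_mul_inv]
  have hGslope : Tendsto (fun z : ℂ => G z / z) (𝓝[≠] 0) (𝓝 (bb 1)) := by
    have hd : HasDerivAt G (bb 1) 0 := rlog_hasDerivAt_zero bb (r/2) hr2 hsumG
    rw [hasDerivAt_iff_tendsto_slope] at hd
    refine hd.congr fun z => ?_
    rw [slope_def_field, hG0]
    simp [div_eq_mul_inv]
  have hWZ : Tendsto (fun y : ℝ => W ((y:ℂ) - (y_c:ℂ)) / ((y:ℂ) - (y_c:ℂ)))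
      (𝓝[>] y_c) (𝓝 (cs 1)) := hWslope.comp hZne'
  have hGZ : Tendsto (fun y : ℝ => G ((y:ℂ) - (y_c:ℂ)) / ((y:ℂ) - (y_c:ℂ)))
      (𝓝[>] y_c) (𝓝 (bb 1)) := hGslope.comp hZne'
  have hWt : Tendsto (fun y : ℝ => W ((y:ℂ) - (y_c:ℂ))) (𝓝[>] y_c) (𝓝 0) := by
    have := ((hWan 0 hmem0W).continuousAt.tendsto).comp hZ0
    rwa [hW0] at this
  have hFt : Tendsto (fun y : ℝ => F ((y:ℂ) - (y_c:ℂ))) (𝓝[>] y_c) (𝓝 (aa 0)) := by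
    have := ((hFan 0 hmem0F).continuousAt.tendsto).comp hZ0
    rwa [hF0] at this
  have hF''t : Tendsto (fun y : ℝ => deriv (deriv F) ((y:ℂ) - (y_c:ℂ))) (𝓝[>] y_c)
      (𝓝 (deriv (deriv F) 0)) :=
    ((hFan.deriv.deriv 0 hmem0F).continuousAt.tendsto).comp hZ0
  have hG''t : Tendsto (fun y : ℝ => deriv (deriv G) ((y:ℂ) - (y_c:ℂ))) (𝓝[>] y_c)
      (𝓝 (deriv (deriv G) 0)) :=
    ((hGan.deriv.deriv 0 hmem0F).continuousAt.tendsto).comp hZ0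
  have hG't : Tendsto (fun y : ℝ => deriv G ((y:ℂ) - (y_c:ℂ))) (𝓝[>] y_c)
      (𝓝 (bb 1)) := by
    have := ((hGan.deriv 0 hmem0F).continuousAt.tendsto).comp hZ0
    rwa [rlog_deriv_zero bb (r/2) hr2 hsumG] at this
  have hW''t : Tendsto (fun y : ℝ => deriv (deriv W) ((y:ℂ) - (y_c:ℂ))) (𝓝[>] y_c)
      (𝓝 (cs 2)) := by
    have := ((hWan.deriv.deriv 0 hmem0W).continuousAt.tendsto).comp hZ0
    rw [rlog_deriv2_zero u (R/2) hR2 hsumW, hu] at this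
    norm_num [Nat.factorial] at this
    have h2 : (2:ℂ) * (cs 2 / 2) = cs 2 := by ring
    rw [h2] at this
    exact this
  have hxlog : Tendsto (fun y : ℝ => (((y - y_c) * Real.log (y - y_c) : ℝ) : ℂ))
      (𝓝[>] y_c) (𝓝 0) := by
    have h1 := tendsto_log_mul_rpow_nhdsGT_zero (r := 1) one_pos
    simp only [Real.rpow_one] at h1
    have hsub : Tendsto (fun y : ℝ => y - y_c) (𝓝[>] y_c) (𝓝[>] 0) := by
      refine tendsto_nhdsWithin_of_tendsto_nhds_of_eventually_within _ ?_ ?_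
      · have := (tendsto_id (x := 𝓝 y_c)).sub_const y_c
        simpa using this.mono_left nhdsWithin_le_nhds
      · filter_upwards [eventually_mem_nhdsWithin] with y hy
        exact sub_pos.mpr (Set.mem_Ioi.mp hy)
    have h2 : Tendsto (fun y : ℝ => (y - y_c) * Real.log (y - y_c)) (𝓝[>] y_c) (𝓝 0) := by
      have := h1.comp hsub
      simpa [mul_comm, Function.comp_def] using this
    have h3 := (Complex.continuous_ofReal.tendsto 0).comp h2
    rw [Complex.ofReal_zero] at h3
    exact h3
  -- total limit of the good form
  have hgood : Tendsto (fun y : ℝ =>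
      W ((y:ℂ) - (y_c:ℂ)) * deriv (deriv F) ((y:ℂ) - (y_c:ℂ))
      + (W ((y:ℂ) - (y_c:ℂ)) / ((y:ℂ) - (y_c:ℂ))) *
          (2 * deriv G ((y:ℂ) - (y_c:ℂ)) - G ((y:ℂ) - (y_c:ℂ)) / ((y:ℂ) - (y_c:ℂ)))
      + ((W ((y:ℂ) - (y_c:ℂ)) / ((y:ℂ) - (y_c:ℂ))) *
          (((y - y_c) * Real.log (y - y_c) : ℝ) : ℂ)) * deriv (deriv G) ((y:ℂ) - (y_c:ℂ))
      - deriv (deriv W) ((y:ℂ) - (y_c:ℂ)) * F ((y:ℂ) - (y_c:ℂ))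
      - (deriv (deriv W) ((y:ℂ) - (y_c:ℂ)) * (((y - y_c) * Real.log (y - y_c) : ℝ) : ℂ)) *
          (G ((y:ℂ) - (y_c:ℂ)) / ((y:ℂ) - (y_c:ℂ))))
      (𝓝[>] y_c) (𝓝 (cs 1 * bb 1 - cs 2 * aa 0)) := by
    have T := ((((hWt.mul hF''t).add
      (hWZ.mul ((hG't.const_mul 2).sub hGZ))).add
      ((hWZ.mul hxlog).mul hG''t)).sub
      (hW''t.mul hFt)).sub
      ((hW''t.mul hxlog).mul hGZ)
    have hval : (0 : ℂ) * deriv (deriv F) 0 + cs 1 * (2 * bb 1 - bb 1)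
        + (cs 1 * 0) * deriv (deriv G) 0 - cs 2 * aa 0 - (cs 2 * 0) * bb 1
        = cs 1 * bb 1 - cs 2 * aa 0 := by ring
    rw [hval] at T
    exact T
  -- identify the good form with the key expression on the right neighbourhood
  have hE : ∀ᶠ y in 𝓝[>] y_c, (fun y : ℝ =>
      W ((y:ℂ) - (y_c:ℂ)) * deriv (deriv F) ((y:ℂ) - (y_c:ℂ))
      + (W ((y:ℂ) - (y_c:ℂ)) / ((y:ℂ) - (y_c:ℂ))) *
          (2 * deriv G ((y:ℂ) - (y_c:ℂ)) - G ((y:ℂ) - (y_c:ℂ)) / ((y:ℂ) - (y_c:ℂ)))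
      + ((W ((y:ℂ) - (y_c:ℂ)) / ((y:ℂ) - (y_c:ℂ))) *
          (((y - y_c) * Real.log (y - y_c) : ℝ) : ℂ)) * deriv (deriv G) ((y:ℂ) - (y_c:ℂ))
      - deriv (deriv W) ((y:ℂ) - (y_c:ℂ)) * F ((y:ℂ) - (y_c:ℂ))
      - (deriv (deriv W) ((y:ℂ) - (y_c:ℂ)) * (((y - y_c) * Real.log (y - y_c) : ℝ) : ℂ)) *
          (G ((y:ℂ) - (y_c:ℂ)) / ((y:ℂ) - (y_c:ℂ)))) y = 0 := by
    filter_upwards [Ioo_mem_nhdsGT_of_mem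
      (show y_c ∈ Set.Ico y_c (y_c + δ) from ⟨le_refl y_c, by linarith⟩)] with y hy
    have h := hkey y hy
    have hlt : (0:ℝ) < y - y_c := by linarith [hy.1]
    have hZne : ((y:ℂ) - (y_c:ℂ)) ≠ 0 := by
      rw [← Complex.ofReal_sub]
      exact_mod_cast ne_of_gt hlt
    have hcast : (((y - y_c) * Real.log (y - y_c) : ℝ) : ℂ)
        = ((y:ℂ) - (y_c:ℂ)) * (Real.log (y - y_c) : ℂ) := by push_cast; ring
    rw [← h]
    rw [hcast]
    field_simp
    ring
  have hlim0 : Tendsto (fun y : ℝ =>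
      W ((y:ℂ) - (y_c:ℂ)) * deriv (deriv F) ((y:ℂ) - (y_c:ℂ))
      + (W ((y:ℂ) - (y_c:ℂ)) / ((y:ℂ) - (y_c:ℂ))) *
          (2 * deriv G ((y:ℂ) - (y_c:ℂ)) - G ((y:ℂ) - (y_c:ℂ)) / ((y:ℂ) - (y_c:ℂ)))
      + ((W ((y:ℂ) - (y_c:ℂ)) / ((y:ℂ) - (y_c:ℂ))) *
          (((y - y_c) * Real.log (y - y_c) : ℝ) : ℂ)) * deriv (deriv G) ((y:ℂ) - (y_c:ℂ))
      - deriv (deriv W) ((y:ℂ) - (y_c:ℂ)) * F ((y:ℂ) - (y_c:ℂ))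
      - (deriv (deriv W) ((y:ℂ) - (y_c:ℂ)) * (((y - y_c) * Real.log (y - y_c) : ℝ) : ℂ)) *
          (G ((y:ℂ) - (y_c:ℂ)) / ((y:ℂ) - (y_c:ℂ))))
      (𝓝[>] y_c) (𝓝 0) :=
    Tendsto.congr' (EventuallyEq.symm hE) tendsto_const_nhds
  have hfinal : cs 1 * bb 1 - cs 2 * aa 0 = 0 := tendsto_nhds_unique hgood hlim0
  exact sub_eq_zero.mp hfinal
end

section
/- Let y_c ∈ ℝ, c ∈ ℂ, and let U_s(y) - c = Σ_{n≥1} c_n (y - y_c)^n / n! be a convergent power series on |y - y_c| < R with c_1 ≠ 0. Let (a_n)_{n≥0} and (b_n)_{n≥1} be complex sequences whose power series have positive radius of convergence, with ψ(y) := Σ_{n≥0} a_n (y - y_c)^n + log(y - y_c) · Σ_{n≥1} b_n (y - y_c)^n satisfying (U_s(y) - c) ψ''(y) - U_s''(y) ψ(y) = 0 on an interval (y_c, y_c + σ), σ > 0. Then for every n ≥ 3 the coefficients b_n satisfy the recursion: (n-1)(n-2) c_1 b_{n-1} + Σ_{p=2}^{n-2} (n-p)(n-p-1) c_p b_{n-p}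 / p! = Σ_{p=0}^{n-3} (p+2)(p+1) b_{n-2-p} c_{p+2} / (p+2)!. -/
open Filter Topology

namespace RayAux

noncomputable def S (d : ℕ → ℂ) : ℕ → ℂ := fun n => ((n : ℂ) + 1) * d (n + 1)

noncomputable def fd (d : ℕ → ℂ) (z : ℂ) : ℂ := ∑' n, d n * z ^ n

def Gd (d : ℕ → ℂ) (t : ℝ) : Prop :=
  ∀ z : ℂ, ‖z‖ < t → Summable (fun n => ‖d n * z ^ n‖)

lemma Gd.mono {d : ℕ → ℂ} {t t' : ℝ} (h : Gd d t) (ht : t' ≤ t) : Gd d t' :=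
  fun z hz => h z (lt_of_lt_of_le hz ht)

lemma Gd.summable {d : ℕ → ℂ} {t : ℝ} (h : Gd d t) {z : ℂ} (hz : ‖z‖ < t) :
    Summable (fun n => d n * z ^ n) := (h z hz).of_norm

lemma exists_bound {d : ℕ → ℂ} {w : ℝ} (h : Summable fun n => ‖d n * (w : ℂ) ^ n‖) :
    ∃ C : ℝ, 0 ≤ C ∧ ∀ n, ‖d n‖ * |w| ^ n ≤ C := by
  have h0 : Tendsto (fun n => ‖d n * (w : ℂ) ^ n‖) atTop (𝓝 0) := h.tendsto_atTop_zero
  obtain ⟨C, hC⟩ := h0.bddAbove_range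
  refine ⟨C, le_trans (norm_nonneg _) (hC ⟨0, rfl⟩), fun n => ?_⟩
  have := hC ⟨n, rfl⟩
  simpa [norm_mul, norm_pow, Complex.norm_real, Real.norm_eq_abs] using this

lemma gd_of_summable {d : ℕ → ℂ} {w : ℝ} (hw : Summable fun n => d n * (w : ℂ) ^ n) :
    Gd d w := by
  intro z hz
  have hw0 : 0 < w := lt_of_le_of_lt (norm_nonneg z) hz
  obtain ⟨C, hC0, hC⟩ := exists_bound hw.norm
  have hq0 : 0 ≤ ‖z‖ / w := div_nonneg (norm_nonneg z) hw0.le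
  have hq1 : ‖z‖ / w < 1 := (div_lt_one hw0).2 hz
  refine Summable.of_nonneg_of_le (fun n => norm_nonneg _) (fun n => ?_)
    ((summable_geometric_of_lt_one hq0 hq1).mul_left C)
  have h1 : ‖d n * z ^ n‖ = (‖d n‖ * w ^ n) * (‖z‖ / w) ^ n := by
    rw [norm_mul, norm_pow, div_pow]
    field_simp
  rw [h1]
  have : ‖d n‖ * w ^ n ≤ C := by
    have := hC n
    rwa [abs_of_pos hw0] at this
  exact mul_le_mul_of_nonneg_right this (pow_nonneg hq0 n)

/-- master comparison: coefficients dominated by a quadratic weight times `d`. -/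
lemma Gd.of_sq_bound {d e : ℕ → ℂ} {t : ℝ} (h : Gd d t)
    (hb : ∀ n, ‖e n‖ ≤ ((n : ℝ) + 1) ^ 2 * ‖d n‖) : Gd e t := by
  intro z hz
  set t' : ℝ := (‖z‖ + t) / 2 with ht'
  have h0 : 0 ≤ ‖z‖ := norm_nonneg z
  have hz' : ‖z‖ < t' := by simp only [ht']; linarith
  have ht't : t' < t := by simp only [ht']; linarith
  have ht'0 : 0 < t' := by linarith
  have hsum : Summable (fun n => ‖d n * (t' : ℂ) ^ n‖) := by
    apply h
    rw [Complex.norm_real, Real.norm_eq_abs, abs_of_pos ht'0]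
    exact ht't
  obtain ⟨C, hC0, hC⟩ := exists_bound hsum
  have hq0 : 0 ≤ ‖z‖ / t' := div_nonneg h0 ht'0.le
  have hq1 : ‖z‖ / t' < 1 := (div_lt_one ht'0).2 hz'
  -- summable ((n+1)^2 * q^n)
  have hgeo : Summable (fun n : ℕ => ((n : ℝ) + 1) ^ 2 * (‖z‖ / t') ^ n) := by
    have h1 : Summable (fun n : ℕ => (n : ℝ) ^ 2 * (‖z‖ / t') ^ n) := by
      have := summable_pow_mul_geometric_of_norm_lt_one (R := ℝ) 2
        (r := ‖z‖ / t') (by rwa [Real.norm_eq_abs, abs_of_nonneg hq0])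
      simpa using this
    have h2 : Summable (fun n : ℕ => (n : ℝ) * (‖z‖ / t') ^ n) := by
      have := summable_pow_mul_geometric_of_norm_lt_one (R := ℝ) 1
        (r := ‖z‖ / t') (by rwa [Real.norm_eq_abs, abs_of_nonneg hq0])
      simpa using this
    have h3 : Summable (fun n : ℕ => (‖z‖ / t') ^ n) :=
      summable_geometric_of_lt_one hq0 hq1
    have := (h1.add ((h2.mul_left 2).add h3))
    apply this.congr
    intro n; ring
  refine Summable.of_nonneg_of_le (fun n => norm_nonneg _) (fun n => ?_)
    (hgeo.mul_left C)
  have hzq : ‖z‖ ^ n = t' ^ n * (‖z‖ / t') ^ n := by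
    rw [← mul_pow]
    congr 1
    rw [mul_comm, div_mul_cancel₀ _ ht'0.ne']
  have hle : ‖e n * z ^ n‖ ≤ ((n : ℝ) + 1) ^ 2 * (‖d n‖ * t' ^ n) * (‖z‖ / t') ^ n := by
    rw [norm_mul, norm_pow]
    calc ‖e n‖ * ‖z‖ ^ n ≤ ((n : ℝ) + 1) ^ 2 * ‖d n‖ * ‖z‖ ^ n :=
          mul_le_mul_of_nonneg_right (hb n) (pow_nonneg h0 n)
      _ = ((n : ℝ) + 1) ^ 2 * (‖d n‖ * t' ^ n) * (‖z‖ / t') ^ n := by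
          rw [hzq]; ring
  refine le_trans hle ?_
  have h4 : ‖d n‖ * t' ^ n ≤ C := by
    have := hC n; rwa [abs_of_pos ht'0] at this
  calc ((n : ℝ) + 1) ^ 2 * (‖d n‖ * t' ^ n) * (‖z‖ / t') ^ n
      ≤ ((n : ℝ) + 1) ^ 2 * C * (‖z‖ / t') ^ n := by
        apply mul_le_mul_of_nonneg_right _ (pow_nonneg hq0 n)
        exact mul_le_mul_of_nonneg_left h4 (by positivity)
    _ = C * (((n : ℝ) + 1) ^ 2 * (‖z‖ / t') ^ n) := by ring

lemma Gd.tail {d : ℕ → ℂ} {t : ℝ} (h : Gd d t) : Gd (fun n => d (n + 1)) t := by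
  intro z hz
  by_cases hz0 : z = 0
  · subst hz0
    apply summable_of_ne_finset_zero (s := {0})
    intro n hn
    have : n ≠ 0 := by simpa using hn
    simp [zero_pow this]
  · have h1 : Summable (fun n => ‖d (n + 1) * z ^ (n + 1)‖) :=
      (summable_nat_add_iff 1).2 (h z hz)
    have h2 := h1.mul_left (‖z‖⁻¹)
    apply h2.congr
    intro n
    have hzn : ‖z‖ ≠ 0 := by simpa using hz0
    have h3 : ‖d (n + 1) * z ^ (n + 1)‖ = ‖z‖ * ‖d (n + 1) * z ^ n‖ := by
      rw [norm_mul, norm_mul, norm_pow, norm_pow, pow_succ]; ring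
    rw [h3, inv_mul_cancel_left₀ hzn]

lemma Gd.shift {d : ℕ → ℂ} {t : ℝ} (h : Gd d t) : Gd (S d) t := by
  apply h.tail.of_sq_bound
  intro n
  simp only [S, norm_mul]
  have h1 : ‖((n : ℂ) + 1)‖ = (n : ℝ) + 1 := by
    rw [show ((n : ℂ) + 1) = ((n + 1 : ℕ) : ℂ) by push_cast; ring]
    rw [Complex.norm_natCast]; push_cast; ring
  rw [h1]
  have : (n : ℝ) + 1 ≤ ((n : ℝ) + 1) ^ 2 := by nlinarith [Nat.cast_nonneg (α := ℝ) n]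
  exact mul_le_mul_of_nonneg_right this (norm_nonneg _)

lemma Gd.add {d e : ℕ → ℂ} {t : ℝ} (hd : Gd d t) (he : Gd e t) :
    Gd (fun n => d n + e n) t := by
  intro z hz
  refine Summable.of_nonneg_of_le (fun n => norm_nonneg _) (fun n => ?_)
    ((hd z hz).add (he z hz))
  rw [add_mul]
  exact norm_add_le _ _

lemma Gd.sub {d e : ℕ → ℂ} {t : ℝ} (hd : Gd d t) (he : Gd e t) :
    Gd (fun n => d n - e n) t := by
  intro z hz
  refine Summable.of_nonneg_of_le (fun n => norm_nonneg _) (fun n => ?_)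
    ((hd z hz).add (he z hz))
  rw [sub_mul]
  exact norm_sub_le _ _

lemma Gd.cauchy {d e : ℕ → ℂ} {t : ℝ} (hd : Gd d t) (he : Gd e t) :
    Gd (fun n => ∑ p ∈ Finset.range (n + 1), d p * e (n - p)) t := by
  intro z hz
  have h := summable_norm_sum_mul_range_of_summable_norm (hd z hz) (he z hz)
  apply h.congr
  intro n
  congr 1
  rw [Finset.sum_mul]
  apply Finset.sum_congr rfl
  intro p hp
  have hpn : p ≤ n := Nat.lt_succ_iff.mp (Finset.mem_range.mp hp)
  rw [mul_mul_mul_comm, ← pow_add]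
  congr 2
  omega

lemma fd_at_zero (d : ℕ → ℂ) : fd d 0 = d 0 := by
  rw [fd, tsum_eq_single 0]
  · simp
  · intro b hb
    simp [zero_pow hb]

lemma fd_head {d : ℕ → ℂ} {t : ℝ} (h : Gd d t) {z : ℂ} (hz : ‖z‖ < t) :
    fd d z = d 0 + z * fd (fun n => d (n + 1)) z := by
  rw [fd, Summable.tsum_eq_zero_add (h.summable hz)]
  congr 1
  · simp
  · rw [fd, ← tsum_mul_left]
    apply tsum_congr
    intro n
    rw [pow_succ]
    ring

lemma fd_factor {t : ℝ} (m : ℕ) : ∀ (d : ℕ → ℂ), Gd d t → (∀ j, j < m → d j = 0) →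
    ∀ {z : ℂ}, ‖z‖ < t → fd d z = z ^ m * fd (fun n => d (n + m)) z := by
  induction m with
  | zero => intro d _ _ z hz; simp
  | succ m ih =>
    intro d hd h0 z hz
    have h1 : fd d z = z * fd (fun n => d (n + 1)) z := by
      rw [fd_head hd hz, h0 0 (Nat.succ_pos m), zero_add]
    have h2 := ih (fun n => d (n + 1)) hd.tail
      (fun j hj => h0 (j + 1) (by omega)) hz
    have h3 : (fun n => (fun k => d (k + 1)) (n + m)) = (fun n => d (n + (m + 1))) := by
      funext n
      show d (n + m + 1) = d (n + (m + 1))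
      have hnm : n + m + 1 = n + (m + 1) := by omega
      rw [hnm]
    rw [h3] at h2
    rw [h1, h2]
    ring

lemma hasDerivAt_fd {d : ℕ → ℂ} {t : ℝ} (h : Gd d t) {z : ℂ} (hz : ‖z‖ < t) :
    HasDerivAt (fd d) (fd (S d) z) z := by
  set t' : ℝ := (‖z‖ + t) / 2 with ht'
  have h0 : 0 ≤ ‖z‖ := norm_nonneg z
  have hz' : ‖z‖ < t' := by simp only [ht']; linarith
  have ht't : t' < t := by simp only [ht']; linarith
  have ht'0 : 0 < t' := by linarith
  have hS : Gd (S d) t := h.shift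
  have ht'n : ‖((t' : ℝ) : ℂ)‖ < t := by
    rw [Complex.norm_real, Real.norm_eq_abs, abs_of_pos ht'0]; exact ht't
  set u : ℕ → ℝ := fun n => (n : ℝ) * ‖d n‖ * t' ^ (n - 1) with hu_def
  have hu : Summable u := by
    rw [← summable_nat_add_iff 1]
    apply (hS ((t' : ℝ) : ℂ) ht'n).congr
    intro n
    simp only [hu_def, S, norm_mul, norm_pow, Complex.norm_real, Real.norm_eq_abs,
      abs_of_pos ht'0]
    have : ‖((n : ℂ) + 1)‖ = (n : ℝ) + 1 := by
      rw [show ((n : ℂ) + 1) = ((n + 1 : ℕ) : ℂ) by push_cast; ring, Complex.norm_natCast]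
      push_cast; ring
    rw [this]
    push_cast
    ring_nf
  have key : HasDerivAt (fun w => ∑' n, d n * w ^ n)
      (∑' n, d n * ((n : ℂ) * z ^ (n - 1))) z := by
    apply hasDerivAt_tsum_of_isPreconnected hu (Metric.isOpen_ball (x := (0 : ℂ)) (ε := t'))
      ((convex_ball (0 : ℂ) t').isPreconnected)
      (g := fun n w => d n * w ^ n) (g' := fun n w => d n * ((n : ℂ) * w ^ (n - 1)))
      (y₀ := 0)
    · intro n w _
      exact (hasDerivAt_pow n w).const_mul (d n)
    · intro n w hw
      rw [mem_ball_zero_iff] at hw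
      simp only [hu_def, norm_mul, norm_pow, Complex.norm_natCast]
      calc ‖d n‖ * ((n : ℝ) * ‖w‖ ^ (n - 1)) = (n : ℝ) * ‖d n‖ * ‖w‖ ^ (n - 1) := by ring
        _ ≤ (n : ℝ) * ‖d n‖ * t' ^ (n - 1) := by
            apply mul_le_mul_of_nonneg_left _ (by positivity)
            exact pow_le_pow_left₀ (norm_nonneg w) hw.le _
    · rw [mem_ball_zero_iff]; simpa using ht'0
    · apply summable_of_ne_finset_zero (s := {0})
      intro n hn
      have : n ≠ 0 := by simpa using hn
      simp [zero_pow this]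
    · rw [mem_ball_zero_iff]; exact hz'
  have hsum2 : Summable (fun n => d n * ((n : ℂ) * z ^ (n - 1))) := by
    rw [← summable_nat_add_iff 1]
    apply (hS.summable hz).congr
    intro n
    simp only [S]
    push_cast
    ring_nf
  have heq2 : (∑' n, d n * ((n : ℂ) * z ^ (n - 1))) = fd (S d) z := by
    rw [Summable.tsum_eq_zero_add hsum2]
    simp only [Nat.cast_zero, zero_mul, mul_zero, zero_add]
    rw [fd]
    apply tsum_congr
    intro n
    simp only [S]
    push_cast
    ring_nf
  rw [← heq2]
  exact key

lemma continuousAt_fd {d : ℕ → ℂ} {t : ℝ} (h : Gd d t) {z : ℂ} (hz : ‖z‖ < t) :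
    ContinuousAt (fd d) z := (hasDerivAt_fd h hz).continuousAt

lemma fd_mul {d e : ℕ → ℂ} {t : ℝ} (hd : Gd d t) (he : Gd e t) {z : ℂ} (hz : ‖z‖ < t) :
    fd d z * fd e z = fd (fun n => ∑ p ∈ Finset.range (n + 1), d p * e (n - p)) z := by
  rw [fd, fd, fd,
    tsum_mul_tsum_eq_tsum_sum_range_of_summable_norm (hd z hz) (he z hz)]
  apply tsum_congr
  intro n
  rw [Finset.sum_mul]
  apply Finset.sum_congr rfl
  intro p hp
  have hpn : p ≤ n := Nat.lt_succ_iff.mp (Finset.mem_range.mp hp)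
  rw [mul_mul_mul_comm, ← pow_add]
  congr 2
  omega

lemma fd_add {d e : ℕ → ℂ} {t : ℝ} (hd : Gd d t) (he : Gd e t) {z : ℂ} (hz : ‖z‖ < t) :
    fd (fun n => d n + e n) z = fd d z + fd e z := by
  rw [fd, fd, fd, ← Summable.tsum_add (hd.summable hz) (he.summable hz)]
  apply tsum_congr; intro n; ring

lemma fd_sub {d e : ℕ → ℂ} {t : ℝ} (hd : Gd d t) (he : Gd e t) {z : ℂ} (hz : ‖z‖ < t) :
    fd (fun n => d n - e n) z = fd d z - fd e z := by
  rw [fd, fd, fd, ← Summable.tsum_sub (hd.summable hz) (he.summable hz)]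
  apply tsum_congr; intro n; ring

lemma Gd.mul_n {d : ℕ → ℂ} {t : ℝ} (h : Gd d t) : Gd (fun n => (n : ℂ) * d n) t := by
  apply h.of_sq_bound
  intro n
  rw [norm_mul, Complex.norm_natCast]
  apply mul_le_mul_of_nonneg_right _ (norm_nonneg _)
  nlinarith [Nat.cast_nonneg (α := ℝ) n]

lemma Gd.mul_nn1 {d : ℕ → ℂ} {t : ℝ} (h : Gd d t) :
    Gd (fun n => (n : ℂ) * ((n : ℂ) - 1) * d n) t := by
  apply h.of_sq_bound
  intro n
  rw [norm_mul, norm_mul, Complex.norm_natCast]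
  apply mul_le_mul_of_nonneg_right _ (norm_nonneg _)
  have h1 : ‖(n : ℂ) - 1‖ ≤ (n : ℝ) + 1 := by
    refine le_trans (norm_sub_le _ _) ?_
    simp
  calc (n : ℝ) * ‖(n : ℂ) - 1‖ ≤ (n : ℝ) * ((n : ℝ) + 1) :=
        mul_le_mul_of_nonneg_left h1 (Nat.cast_nonneg n)
    _ ≤ ((n : ℝ) + 1) ^ 2 := by nlinarith [Nat.cast_nonneg (α := ℝ) n]

lemma fd_n {d : ℕ → ℂ} {t : ℝ} (h : Gd d t) {z : ℂ} (hz : ‖z‖ < t) :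
    fd (fun n => (n : ℂ) * d n) z = z * fd (S d) z := by
  have hs : Summable (fun n : ℕ => ((n : ℂ) * d n) * z ^ n) := (h.mul_n).summable hz
  rw [fd, Summable.tsum_eq_zero_add hs]
  simp only [Nat.cast_zero, zero_mul, zero_add]
  rw [fd, ← tsum_mul_left]
  apply tsum_congr
  intro n
  simp only [S]
  push_cast
  ring

lemma fd_nn1 {d : ℕ → ℂ} {t : ℝ} (h : Gd d t) {z : ℂ} (hz : ‖z‖ < t) :
    fd (fun n => (n : ℂ) * ((n : ℂ) - 1) * d n) z = z ^ 2 * fd (S (S d)) z := by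
  have hGe : Gd (fun n : ℕ => ((n : ℂ) - 1) * d n) t := by
    apply h.of_sq_bound
    intro n
    rw [norm_mul]
    apply mul_le_mul_of_nonneg_right _ (norm_nonneg _)
    refine le_trans (norm_sub_le _ _) ?_
    rw [Complex.norm_natCast, norm_one]
    nlinarith [Nat.cast_nonneg (α := ℝ) n]
  have h1 : (fun n : ℕ => (n : ℂ) * ((n : ℂ) - 1) * d n)
      = (fun n : ℕ => (n : ℂ) * (((n : ℂ) - 1) * d n)) := by
    funext n; ring
  rw [h1, fd_n hGe hz]
  have h2 : S (fun n : ℕ => ((n : ℂ) - 1) * d n) = fun n : ℕ => (n : ℂ) * S d n := by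
    funext n
    simp only [S]
    push_cast
    ring
  rw [h2, fd_n h.shift hz]
  ring

lemma Gd.const_mul {d : ℕ → ℂ} {t : ℝ} (h : Gd d t) (c0 : ℂ) :
    Gd (fun n => c0 * d n) t := by
  intro z hz
  apply ((h z hz).mul_left ‖c0‖).congr
  intro n
  rw [mul_assoc, norm_mul, norm_mul]
  rw [norm_mul]

lemma Gd.tail_add {d : ℕ → ℂ} {t : ℝ} (h : Gd d t) (m : ℕ) :
    Gd (fun n => d (n + m)) t := by
  induction m with
  | zero => simpa using h
  | succ m ih =>
    have := ih.tail
    intro z hz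
    apply (this z hz).congr
    intro n
    show ‖d (n + 1 + m) * z ^ n‖ = ‖d (n + (m + 1)) * z ^ n‖
    have hnm : n + 1 + m = n + (m + 1) := by omega
    rw [hnm]

lemma hasDerivAt_fd_real {d : ℕ → ℂ} {t : ℝ} (h : Gd d t) (y_c x : ℝ)
    (hx : |x - y_c| < t) :
    HasDerivAt (fun s : ℝ => fd d ((s : ℂ) - (y_c : ℂ)))
      (fd (S d) ((x : ℂ) - (y_c : ℂ))) x := by
  have hn : ‖((x : ℂ) - (y_c : ℂ))‖ < t := by
    rw [show (x : ℂ) - (y_c : ℂ) = ((x - y_c : ℝ) : ℂ) by push_cast; ring,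
      Complex.norm_real, Real.norm_eq_abs]
    exact hx
  have h1 : HasDerivAt (fun w : ℂ => fd d (w - (y_c : ℂ)))
      (fd (S d) ((x : ℂ) - (y_c : ℂ))) (x : ℂ) := by
    have h2 := (hasDerivAt_fd h hn).comp (x : ℂ)
      ((hasDerivAt_id ((x : ℂ))).sub_const ((y_c : ℂ)))
    simpa [Function.comp_def] using h2
  exact h1.comp_ofReal

end RayAux
section MainThm

open Filter Topology RayAux

/-- If `ψ(y) = Σ aₙ (y-y_c)ⁿ + log(y-y_c) Σ bₙ (y-y_c)ⁿ` solves the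
Rayleigh equation `(U_s - c) ψ'' - U_s'' ψ = 0` on `(y_c, y_c + σ)`, then for every
`n ≥ 3` the coefficients `bₙ` satisfy the recursion
`(n-1)(n-2) c₁ b_{n-1} + Σ_{p=2}^{n-2} (n-p)(n-p-1) cₚ b_{n-p}/p!
  = Σ_{p=0}^{n-3} (p+2)(p+1) b_{n-2-p} c_{p+2}/(p+2)!`. -/
theorem rayleigh_log_series_b_recursion
    (y_c : ℝ) (c : ℂ) (R : ℝ) (hR : 0 < R)
    (U : ℝ → ℂ) (cs : ℕ → ℂ) (hc0 : cs 0 = 0) (hc1ne : cs 1 ≠ 0)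
    (hU : ∀ y : ℝ, |y - y_c| < R →
      HasSum (fun n : ℕ => cs n * ((y : ℂ) - (y_c : ℂ)) ^ n / (Nat.factorial n : ℂ))
        (U y - c))
    (aa bb : ℕ → ℂ) (hb0 : bb 0 = 0)
    (r : ℝ) (hr : 0 < r)
    (hconv : ∀ Y : ℂ, ‖Y‖ < r →
      Summable (fun n : ℕ => aa n * Y ^ n) ∧ Summable (fun n : ℕ => bb n * Y ^ n))
    (σ : ℝ) (hσ : 0 < σ)
    (heq : ∀ y : ℝ, y_c < y → y < y_c + σ →
      (U y - c) *
          deriv (deriv (fun t : ℝ =>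
            (∑' n : ℕ, aa n * ((t : ℂ) - (y_c : ℂ)) ^ n)
              + (Real.log (t - y_c) : ℂ)
                  * (∑' n : ℕ, bb n * ((t : ℂ) - (y_c : ℂ)) ^ n))) y
        - deriv (deriv U) y *
          ((∑' n : ℕ, aa n * ((y : ℂ) - (y_c : ℂ)) ^ n)
              + (Real.log (y - y_c) : ℂ)
                  * (∑' n : ℕ, bb n * ((y : ℂ) - (y_c : ℂ)) ^ n)) = 0) :
    ∀ n : ℕ, 3 ≤ n →
      ((n : ℂ) - 1) * ((n : ℂ) - 2) * cs 1 * bb (n - 1)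
        + ∑ p ∈ Finset.Icc 2 (n - 2),
            ((n : ℂ) - (p : ℂ)) * ((n : ℂ) - (p : ℂ) - 1) * cs p * bb (n - p)
              / (Nat.factorial p : ℂ)
      = ∑ p ∈ Finset.range (n - 2),
          ((p : ℂ) + 2) * ((p : ℂ) + 1) * bb (n - 2 - p) * cs (p + 2)
            / (Nat.factorial (p + 2) : ℂ) := by
  classical
  -- radii
  set t0 : ℝ := min r R with ht0_def
  have ht0 : 0 < t0 := lt_min hr hR
  set ρ : ℝ := min t0 σ with hρ_def
  have hρ : 0 < ρ := lt_min ht0 hσ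
  have hρt0 : ρ ≤ t0 := min_le_left _ _
  have hρσ : ρ ≤ σ := min_le_right _ _
  have ht0r : t0 ≤ r := min_le_left _ _
  have ht0R : t0 ≤ R := min_le_right _ _
  -- coefficient sequences
  set fc : ℕ → ℂ := fun n => cs n / (Nat.factorial n : ℂ) with hfc_def
  -- summability
  have hGa : Gd aa t0 := by
    intro z hz
    have hw : ‖z‖ < (‖z‖ + r) / 2 := by
      have := lt_of_lt_of_le hz ht0r; linarith
    have hwr : (‖z‖ + r) / 2 < r := by
      have := lt_of_lt_of_le hz ht0r; linarith
    have hnw : ‖(((‖z‖ + r) / 2 : ℝ) : ℂ)‖ < r := by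
      rw [Complex.norm_real, Real.norm_eq_abs, abs_of_pos (by positivity)]
      exact hwr
    exact gd_of_summable (hconv _ hnw).1 z hw
  have hGb : Gd bb t0 := by
    intro z hz
    have hw : ‖z‖ < (‖z‖ + r) / 2 := by
      have := lt_of_lt_of_le hz ht0r; linarith
    have hwr : (‖z‖ + r) / 2 < r := by
      have := lt_of_lt_of_le hz ht0r; linarith
    have hnw : ‖(((‖z‖ + r) / 2 : ℝ) : ℂ)‖ < r := by
      rw [Complex.norm_real, Real.norm_eq_abs, abs_of_pos (by positivity)]
      exact hwr
    exact gd_of_summable (hconv _ hnw).2 z hw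
  have hGf : Gd fc t0 := by
    intro z hz
    have hzR := lt_of_lt_of_le hz ht0R
    set w : ℝ := (‖z‖ + R) / 2 with hw_def
    have hw : ‖z‖ < w := by simp only [hw_def]; linarith
    have hwR : w < R := by simp only [hw_def]; linarith
    have hw0 : 0 < w := lt_of_le_of_lt (norm_nonneg z) hw
    have habs : |y_c + w - y_c| < R := by
      rw [show y_c + w - y_c = w by ring, abs_of_pos hw0]; exact hwR
    have hsum := (hU (y_c + w) habs).summable
    have hsum2 : Summable (fun n : ℕ => fc n * ((w : ℝ) : ℂ) ^ n) := by
      apply hsum.congr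
      intro n
      rw [hfc_def]
      push_cast
      ring
    exact gd_of_summable hsum2 z hw
  -- value of U
  have hUval : ∀ y : ℝ, |y - y_c| < R → U y = c + fd fc ((y : ℂ) - (y_c : ℂ)) := by
    intro y hy
    have h1 := (hU y hy).tsum_eq
    have h2 : fd fc ((y : ℂ) - (y_c : ℂ))
        = ∑' n : ℕ, cs n * ((y : ℂ) - (y_c : ℂ)) ^ n / (Nat.factorial n : ℂ) := by
      rw [fd]
      apply tsum_congr
      intro n
      rw [hfc_def]
      ring
    rw [h2, h1]
    ring
  -- the coefficient sequences for the two analytic pieces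
  set inn : ℕ → ℂ := fun n =>
    (n : ℂ) * ((n : ℂ) - 1) * aa n + (2 * ((n : ℂ) * bb n) - bb n) with hinn_def
  set qq : ℕ → ℂ := fun n => (n : ℂ) * ((n : ℂ) - 1) * fc n with hqq_def
  set g : ℕ → ℂ := fun n =>
    (∑ p ∈ Finset.range (n + 1), fc p * inn (n - p))
      - (∑ p ∈ Finset.range (n + 1), qq p * aa (n - p)) with hg_def
  set k : ℕ → ℂ := fun n =>
    (∑ p ∈ Finset.range (n + 1), fc p * S (S bb) (n - p))
      - (∑ p ∈ Finset.range (n + 1), S (S fc) p * bb (n - p)) with hk_def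
  have hGinn : Gd inn t0 :=
    (hGa.mul_nn1).add (((hGb.mul_n).const_mul 2).sub hGb)
  have hGq : Gd qq t0 := hGf.mul_nn1
  have hGg : Gd g t0 := (hGf.cauchy hGinn).sub (hGq.cauchy hGa)
  have hGk : Gd k t0 := (hGf.cauchy (hGb.shift.shift)).sub ((hGf.shift.shift).cauchy hGb)
  -- values of g and k
  have hgval : ∀ z : ℂ, ‖z‖ < t0 → fd g z
      = fd fc z * (z ^ 2 * fd (S (S aa)) z + (2 * (z * fd (S bb) z) - fd bb z))
        - (z ^ 2 * fd (S (S fc)) z) * fd aa z := by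
    intro z hz
    have h1 : fd g z = fd fc z * fd inn z - fd qq z * fd aa z := by
      rw [hg_def]
      rw [fd_sub (hGf.cauchy hGinn) (hGq.cauchy hGa) hz]
      rw [fd_mul hGf hGinn hz, fd_mul hGq hGa hz]
    rw [h1]
    have h2 : fd inn z = z ^ 2 * fd (S (S aa)) z + (2 * (z * fd (S bb) z) - fd bb z) := by
      rw [hinn_def]
      rw [fd_add hGa.mul_nn1 (((hGb.mul_n).const_mul 2).sub hGb) hz]
      rw [fd_nn1 hGa hz]
      congr 1
      rw [fd_sub ((hGb.mul_n).const_mul 2) hGb hz]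
      congr 1
      have h3 : fd (fun n => 2 * ((n : ℂ) * bb n)) z = 2 * fd (fun n : ℕ => (n : ℂ) * bb n) z := by
        rw [fd, fd, ← tsum_mul_left]
        apply tsum_congr
        intro n
        ring
      rw [h3, fd_n hGb hz]
    rw [h2]
    congr 1
    rw [hqq_def, fd_nn1 hGf hz]
  have hkval : ∀ z : ℂ, ‖z‖ < t0 → fd k z
      = fd fc z * fd (S (S bb)) z - fd (S (S fc)) z * fd bb z := by
    intro z hz
    rw [hk_def]
    rw [fd_sub (hGf.cauchy (hGb.shift.shift)) ((hGf.shift.shift).cauchy hGb) hz]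
    rw [fd_mul hGf (hGb.shift.shift) hz, fd_mul (hGf.shift.shift) hGb hz]
  -- THE KEY ANALYTIC IDENTITY
  have hkey : ∀ Y : ℝ, 0 < Y → Y < ρ →
      fd g ((Y : ℝ) : ℂ) + (Real.log Y : ℂ) * (((Y : ℝ) : ℂ) ^ 2 * fd k ((Y : ℝ) : ℂ)) = 0 := by
    intro Y hY0 hYρ
    set y : ℝ := y_c + Y with hy_def
    have hyy : y - y_c = Y := by rw [hy_def]; ring
    have hy1 : y_c < y := by rw [hy_def]; linarith
    have hy2 : y < y_c + σ := by
      rw [hy_def]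
      have := lt_of_lt_of_le hYρ hρσ
      linarith
    set Z : ℂ := ((Y : ℝ) : ℂ) with hZ_def
    have hZy : (y : ℂ) - (y_c : ℂ) = Z := by rw [hy_def, hZ_def]; push_cast; ring
    have hZnorm : ‖Z‖ < t0 := by
      rw [hZ_def, Complex.norm_real, Real.norm_eq_abs, abs_of_pos hY0]
      exact lt_of_lt_of_le hYρ hρt0
    have hZne : Z ≠ 0 := by
      rw [hZ_def]
      exact Complex.ofReal_ne_zero.mpr (ne_of_gt hY0)
    set I : Set ℝ := Set.Ioo y_c (y_c + ρ) with hI_def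
    have hIopen : IsOpen I := isOpen_Ioo
    have hyI : y ∈ I := by
      rw [hI_def, hy_def]
      constructor <;> [linarith; linarith]
    have hxt0 : ∀ x ∈ I, |x - y_c| < t0 := by
      intro x hx
      rw [hI_def] at hx
      rw [abs_of_pos (by linarith [hx.1])]
      have := hx.2
      linarith [hρt0]
    have hxne : ∀ x ∈ I, x - y_c ≠ 0 := by
      intro x hx
      rw [hI_def] at hx
      have := hx.1
      intro hc
      linarith [sub_pos.mpr this, hc.ge]
    -- first derivative of ψ on I
    have hI1 : ∀ x ∈ I, HasDerivAt
        (fun t : ℝ =>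
          (∑' n : ℕ, aa n * ((t : ℂ) - (y_c : ℂ)) ^ n)
            + (Real.log (t - y_c) : ℂ)
                * (∑' n : ℕ, bb n * ((t : ℂ) - (y_c : ℂ)) ^ n))
        (fd (S aa) ((x : ℂ) - (y_c : ℂ))
          + ((((x - y_c)⁻¹ : ℝ) : ℂ) * fd bb ((x : ℂ) - (y_c : ℂ))
            + (Real.log (x - y_c) : ℂ) * fd (S bb) ((x : ℂ) - (y_c : ℂ)))) x := by
      intro x hx
      have hA := hasDerivAt_fd_real hGa y_c x (hxt0 x hx)
      have hB := hasDerivAt_fd_real hGb y_c x (hxt0 x hx)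
      have hlogR : HasDerivAt (fun t : ℝ => Real.log (t - y_c)) ((x - y_c)⁻¹) x := by
        have h1 := (Real.hasDerivAt_log (hxne x hx)).comp x
          ((hasDerivAt_id x).sub_const y_c)
        simpa [Function.comp_def] using h1
      have hlogC := hlogR.ofReal_comp
      exact hA.add (hlogC.mul hB)
    -- second derivative at y
    have hDD : HasDerivAt
        (fun x : ℝ =>
          fd (S aa) ((x : ℂ) - (y_c : ℂ))
            + ((((x - y_c)⁻¹ : ℝ) : ℂ) * fd bb ((x : ℂ) - (y_c : ℂ))
              + (Real.log (x - y_c) : ℂ) * fd (S bb) ((x : ℂ) - (y_c : ℂ))))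
        (fd (S (S aa)) ((y : ℂ) - (y_c : ℂ))
          + (((((-((y - y_c) ^ 2)⁻¹ : ℝ)) : ℂ) * fd bb ((y : ℂ) - (y_c : ℂ))
                + (((y - y_c)⁻¹ : ℝ) : ℂ) * fd (S bb) ((y : ℂ) - (y_c : ℂ)))
            + ((((y - y_c)⁻¹ : ℝ) : ℂ) * fd (S bb) ((y : ℂ) - (y_c : ℂ))
                + (Real.log (y - y_c) : ℂ) * fd (S (S bb)) ((y : ℂ) - (y_c : ℂ))))) y := by
      have hA2 := hasDerivAt_fd_real hGa.shift y_c y (hxt0 y hyI)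
      have hB1 := hasDerivAt_fd_real hGb y_c y (hxt0 y hyI)
      have hB2 := hasDerivAt_fd_real hGb.shift y_c y (hxt0 y hyI)
      have hinvR : HasDerivAt (fun x : ℝ => (x - y_c)⁻¹) (-(((y - y_c) ^ 2)⁻¹)) y := by
        have h1 := (hasDerivAt_inv (hxne y hyI)).comp y
          ((hasDerivAt_id y).sub_const y_c)
        simpa [Function.comp_def] using h1
      have hinvC := hinvR.ofReal_comp
      have hlogR : HasDerivAt (fun t : ℝ => Real.log (t - y_c)) ((y - y_c)⁻¹) y := by
        have h1 := (Real.hasDerivAt_log (hxne y hyI)).comp y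
          ((hasDerivAt_id y).sub_const y_c)
        simpa [Function.comp_def] using h1
      have hlogC := hlogR.ofReal_comp
      have := hA2.add ((hinvC.mul hB1).add (hlogC.mul hB2))
      convert this using 2
      all_goals rfl
    have hev1 : deriv (fun t : ℝ =>
          (∑' n : ℕ, aa n * ((t : ℂ) - (y_c : ℂ)) ^ n)
            + (Real.log (t - y_c) : ℂ)
                * (∑' n : ℕ, bb n * ((t : ℂ) - (y_c : ℂ)) ^ n))
        =ᶠ[𝓝 y] (fun x : ℝ =>
          fd (S aa) ((x : ℂ) - (y_c : ℂ))
            + ((((x - y_c)⁻¹ : ℝ) : ℂ) * fd bb ((x : ℂ) - (y_c : ℂ))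
              + (Real.log (x - y_c) : ℂ) * fd (S bb) ((x : ℂ) - (y_c : ℂ)))) := by
      filter_upwards [hIopen.mem_nhds hyI] with x hx
      exact (hI1 x hx).deriv
    have hd2 : deriv (deriv (fun t : ℝ =>
          (∑' n : ℕ, aa n * ((t : ℂ) - (y_c : ℂ)) ^ n)
            + (Real.log (t - y_c) : ℂ)
                * (∑' n : ℕ, bb n * ((t : ℂ) - (y_c : ℂ)) ^ n))) y
        = (fd (S (S aa)) ((y : ℂ) - (y_c : ℂ))
          + (((((-((y - y_c) ^ 2)⁻¹ : ℝ)) : ℂ) * fd bb ((y : ℂ) - (y_c : ℂ))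
                + (((y - y_c)⁻¹ : ℝ) : ℂ) * fd (S bb) ((y : ℂ) - (y_c : ℂ)))
            + ((((y - y_c)⁻¹ : ℝ) : ℂ) * fd (S bb) ((y : ℂ) - (y_c : ℂ))
                + (Real.log (y - y_c) : ℂ) * fd (S (S bb)) ((y : ℂ) - (y_c : ℂ))))) := by
      rw [hev1.deriv_eq]
      exact hDD.deriv
    -- second derivative of U at y
    have hyR : ∀ x ∈ I, |x - y_c| < R := fun x hx =>
      lt_of_lt_of_le (hxt0 x hx) ht0R
    have hUev : U =ᶠ[𝓝 y] (fun x : ℝ => c + fd fc ((x : ℂ) - (y_c : ℂ))) := by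
      filter_upwards [hIopen.mem_nhds hyI] with x hx
      exact hUval x (hyR x hx)
    have hUd1 : deriv U =ᶠ[𝓝 y] (fun x : ℝ => fd (S fc) ((x : ℂ) - (y_c : ℂ))) := by
      filter_upwards [hIopen.mem_nhds hyI] with x hx
      have hUev' : U =ᶠ[𝓝 x] (fun s : ℝ => c + fd fc ((s : ℂ) - (y_c : ℂ))) := by
        filter_upwards [hIopen.mem_nhds hx] with s hs
        exact hUval s (hyR s hs)
      rw [hUev'.deriv_eq]
      exact ((hasDerivAt_fd_real hGf y_c x (hxt0 x hx)).const_add c).deriv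
    have hU2 : deriv (deriv U) y = fd (S (S fc)) ((y : ℂ) - (y_c : ℂ)) := by
      rw [hUd1.deriv_eq]
      exact (hasDerivAt_fd_real hGf.shift y_c y (hxt0 y hyI)).deriv
    -- plug into the Rayleigh equation
    have hE := heq y hy1 hy2
    rw [hd2, hU2, hUval y (hyR y hyI)] at hE
    rw [hZy, hyy] at hE
    have htsa : (∑' n : ℕ, aa n * ((y : ℂ) - (y_c : ℂ)) ^ n) = fd aa Z := by
      rw [fd, hZy]
    have htsb : (∑' n : ℕ, bb n * ((y : ℂ) - (y_c : ℂ)) ^ n) = fd bb Z := by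
      rw [fd, hZy]
    rw [hZy] at htsa htsb
    rw [htsa, htsb] at hE
    have hc1 : ((Y⁻¹ : ℝ) : ℂ) = Z⁻¹ := by rw [hZ_def]; push_cast; ring
    have hc2 : ((-((Y : ℝ) ^ 2)⁻¹ : ℝ) : ℂ) = -((Z ^ 2)⁻¹) := by
      rw [hZ_def]; push_cast; ring
    rw [hc1, hc2, add_sub_cancel_left] at hE
    -- now pure algebra
    rw [hgval Z hZnorm, hkval Z hZnorm]
    have hZ2ne : (Z ^ 2) ≠ 0 := pow_ne_zero 2 hZne
    have e1 : Z ^ 2 * (Z ^ 2)⁻¹ = 1 := mul_inv_cancel₀ hZ2ne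
    have e2 : Z ^ 2 * Z⁻¹ = Z := by
      rw [sq, mul_assoc, mul_inv_cancel₀ hZne, mul_one]
    linear_combination Z ^ 2 * hE + (fd fc Z * fd bb Z) * e1
      - (2 * fd fc Z * fd (S bb) Z) * e2
  -- STEP: all coefficients of k vanish
  have hkzero : ∀ m : ℕ, k m = 0 := by
    by_contra hcon
    push_neg at hcon
    obtain ⟨m0, hm0⟩ := hcon
    have hex : ∃ m, k m ≠ 0 := ⟨m0, hm0⟩
    set m := Nat.find hex with hm_def
    have hkm : k m ≠ 0 := Nat.find_spec hex
    have hmin : ∀ j, j < m → k j = 0 := by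
      intro j hj
      by_contra hj'
      exact (Nat.find_min hex hj) hj'
    set u : ℂ → ℂ := fd (fun n => k (n + m)) with hu_def
    have hGkm : Gd (fun n => k (n + m)) t0 := hGk.tail_add m
    have hu0 : u 0 = k m := by
      rw [hu_def, fd_at_zero]
      norm_num
    have hucont : ContinuousAt u 0 := continuousAt_fd hGkm (by simpa using ht0)
    have hofReal : Tendsto (fun Y : ℝ => ((Y : ℝ) : ℂ)) (𝓝[>] (0 : ℝ)) (𝓝 0) := by
      have h1 : Tendsto (fun Y : ℝ => ((Y : ℝ) : ℂ)) (𝓝 (0 : ℝ)) (𝓝 0) := by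
        simpa using Complex.continuous_ofReal.tendsto 0
      exact h1.mono_left nhdsWithin_le_nhds
    have hu_tends : Tendsto (fun Y : ℝ => u ((Y : ℝ) : ℂ)) (𝓝[>] (0 : ℝ)) (𝓝 (k m)) := by
      rw [← hu0]
      exact hucont.tendsto.comp hofReal
    have hmemIoo : Set.Ioo (0 : ℝ) ρ ∈ 𝓝[>] (0 : ℝ) :=
      Ioo_mem_nhdsGT_of_mem ⟨le_refl 0, hρ⟩
    have hnormY : ∀ Y : ℝ, Y ∈ Set.Ioo (0 : ℝ) ρ → ‖((Y : ℝ) : ℂ)‖ < t0 := by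
      intro Y hY
      rw [Complex.norm_real, Real.norm_eq_abs, abs_of_pos hY.1]
      exact lt_of_lt_of_le hY.2 hρt0
    have hkeyev : ∀ᶠ Y in 𝓝[>] (0 : ℝ),
        fd g ((Y : ℝ) : ℂ)
          + (Real.log Y : ℂ) * (((Y : ℝ) : ℂ) ^ (m + 2) * u ((Y : ℝ) : ℂ)) = 0 := by
      filter_upwards [hmemIoo] with Y hY
      have hfac : fd k ((Y : ℝ) : ℂ) = ((Y : ℝ) : ℂ) ^ m * u ((Y : ℝ) : ℂ) :=
        fd_factor m k hGk hmin (hnormY Y hY)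
      have h1 := hkey Y hY.1 hY.2
      rw [hfac] at h1
      rw [← h1]
      ring
    by_cases hg0 : ∀ j, g j = 0
    · -- then fd g vanishes identically; contradiction at one point
      have hgz : ∀ z : ℂ, fd g z = 0 := by
        intro z
        rw [fd]
        have hz1 : (fun n : ℕ => g n * z ^ n) = fun _ => 0 := by
          funext n
          rw [hg0 n, zero_mul]
        rw [hz1, tsum_zero]
      have hune : ∀ᶠ Y in 𝓝[>] (0 : ℝ), u ((Y : ℝ) : ℂ) ≠ 0 :=
        hu_tends.eventually_ne hkm
      have hsmall : Set.Ioo (0 : ℝ) (min ρ 1) ∈ 𝓝[>] (0 : ℝ) :=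
        Ioo_mem_nhdsGT_of_mem ⟨le_refl 0, lt_min hρ one_pos⟩
      obtain ⟨Y, hY1, hY2, hY3⟩ := (hkeyev.and (hune.and hsmall)).exists
      rw [hgz, zero_add] at hY1
      have hY0 : 0 < Y := hY3.1
      have hYlt1 : Y < 1 := lt_of_lt_of_le hY3.2 (min_le_right _ _)
      have hlogne : (Real.log Y : ℂ) ≠ 0 := by
        simp only [ne_eq, Complex.ofReal_eq_zero]
        exact ne_of_lt (Real.log_neg hY0 hYlt1)
      have hYne : ((Y : ℝ) : ℂ) ≠ 0 := Complex.ofReal_ne_zero.mpr (ne_of_gt hY0)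
      have := mul_eq_zero.mp hY1
      rcases this with h | h
      · exact hlogne h
      · rcases mul_eq_zero.mp h with h' | h'
        · exact pow_ne_zero _ hYne h'
        · exact hY2 h'
    · push_neg at hg0
      obtain ⟨j0, hj0⟩ := hg0
      have hexg : ∃ j, g j ≠ 0 := ⟨j0, hj0⟩
      set μ := Nat.find hexg with hμ_def
      have hgμ : g μ ≠ 0 := Nat.find_spec hexg
      have hming : ∀ j, j < μ → g j = 0 := by
        intro j hj
        by_contra hj'
        exact (Nat.find_min hexg hj) hj'
      set v : ℂ → ℂ := fd (fun n => g (n + μ)) with hv_def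
      have hGgm : Gd (fun n => g (n + μ)) t0 := hGg.tail_add μ
      have hv0 : v 0 = g μ := by rw [hv_def, fd_at_zero]; norm_num
      have hvcont : ContinuousAt v 0 := continuousAt_fd hGgm (by simpa using ht0)
      have hv_tends : Tendsto (fun Y : ℝ => v ((Y : ℝ) : ℂ)) (𝓝[>] (0 : ℝ)) (𝓝 (g μ)) := by
        rw [← hv0]
        exact hvcont.tendsto.comp hofReal
      have hfactg : ∀ᶠ Y in 𝓝[>] (0 : ℝ),
          fd g ((Y : ℝ) : ℂ) = ((Y : ℝ) : ℂ) ^ μ * v ((Y : ℝ) : ℂ) := by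
        filter_upwards [hmemIoo] with Y hY
        exact fd_factor μ g hGg hming (hnormY Y hY)
      have hmaineq : ∀ᶠ Y in 𝓝[>] (0 : ℝ),
          ((Y : ℝ) : ℂ) ^ μ * v ((Y : ℝ) : ℂ)
            = -((Real.log Y : ℂ) * (((Y : ℝ) : ℂ) ^ (m + 2) * u ((Y : ℝ) : ℂ))) := by
        filter_upwards [hkeyev, hfactg] with Y h1 h2
        rw [h2] at h1
        exact eq_neg_of_add_eq_zero_left h1
      rcases le_or_gt μ (m + 1) with hle | hlt
      · -- small order of g : divide by Y^μ, RHS → 0, LHS → g μ ≠ 0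
        set e : ℕ := m + 2 - μ with he_def
        have he1 : 1 ≤ e := by omega
        have hev2 : ∀ᶠ Y in 𝓝[>] (0 : ℝ),
            v ((Y : ℝ) : ℂ)
              = ((-(Real.log Y * Y ^ e) : ℝ) : ℂ) * u ((Y : ℝ) : ℂ) := by
          filter_upwards [hmaineq, hmemIoo] with Y h1 hY
          have hYne : ((Y : ℝ) : ℂ) ≠ 0 := Complex.ofReal_ne_zero.mpr (ne_of_gt hY.1)
          apply mul_left_cancel₀ (pow_ne_zero μ hYne)
          rw [h1]
          have hpow : ((Y : ℝ) : ℂ) ^ (m + 2) = ((Y : ℝ) : ℂ) ^ μ * ((Y : ℝ) : ℂ) ^ e := by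
            rw [← pow_add]
            congr 1
            omega
          rw [hpow]
          push_cast
          ring
        have hreal0 : Tendsto (fun Y : ℝ => -(Real.log Y * Y ^ e)) (𝓝[>] (0 : ℝ)) (𝓝 0) := by
          have h1 := tendsto_log_mul_rpow_nhdsGT_zero (r := (e : ℝ)) (by positivity)
          have h2 : Tendsto (fun Y : ℝ => Real.log Y * Y ^ e) (𝓝[>] (0 : ℝ)) (𝓝 0) := by
            apply h1.congr'
            filter_upwards [self_mem_nhdsWithin] with Y hY
            rw [Real.rpow_natCast]
          simpa using h2.neg
        have hRHS0 : Tendsto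
            (fun Y : ℝ => ((-(Real.log Y * Y ^ e) : ℝ) : ℂ) * u ((Y : ℝ) : ℂ))
            (𝓝[>] (0 : ℝ)) (𝓝 0) := by
          have hc : Tendsto (fun Y : ℝ => ((-(Real.log Y * Y ^ e) : ℝ) : ℂ))
              (𝓝[>] (0 : ℝ)) (𝓝 0) := by
            have := (Complex.continuous_ofReal.tendsto 0).comp hreal0
            simpa [Function.comp_def] using this
          have := hc.mul hu_tends
          simpa using this
        have : g μ = 0 := tendsto_nhds_unique (hv_tends.congr' hev2) hRHS0
        exact hgμ this
      · -- large order of g : divide by Y^(m+2), RHS has exploding norm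
        set e : ℕ := μ - (m + 2) with he_def
        have hev3 : ∀ᶠ Y in 𝓝[>] (0 : ℝ),
            ((Y : ℝ) : ℂ) ^ e * v ((Y : ℝ) : ℂ)
              = -((Real.log Y : ℂ) * u ((Y : ℝ) : ℂ)) := by
          filter_upwards [hmaineq, hmemIoo] with Y h1 hY
          have hYne : ((Y : ℝ) : ℂ) ≠ 0 := Complex.ofReal_ne_zero.mpr (ne_of_gt hY.1)
          apply mul_left_cancel₀ (pow_ne_zero (m + 2) hYne)
          have hpow : ((Y : ℝ) : ℂ) ^ μ = ((Y : ℝ) : ℂ) ^ (m + 2) * ((Y : ℝ) : ℂ) ^ e := by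
            rw [← pow_add]
            congr 1
            omega
          calc ((Y : ℝ) : ℂ) ^ (m + 2) * (((Y : ℝ) : ℂ) ^ e * v ((Y : ℝ) : ℂ))
              = ((Y : ℝ) : ℂ) ^ μ * v ((Y : ℝ) : ℂ) := by rw [hpow]; ring
            _ = -((Real.log Y : ℂ) * (((Y : ℝ) : ℂ) ^ (m + 2) * u ((Y : ℝ) : ℂ))) := h1
            _ = ((Y : ℝ) : ℂ) ^ (m + 2) * (-((Real.log Y : ℂ) * u ((Y : ℝ) : ℂ))) := by ring
        have hLHS : Tendsto (fun Y : ℝ => ((Y : ℝ) : ℂ) ^ e * v ((Y : ℝ) : ℂ))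
            (𝓝[>] (0 : ℝ)) (𝓝 ((0 : ℂ) ^ e * g μ)) := by
          have hpw : Tendsto (fun Y : ℝ => ((Y : ℝ) : ℂ) ^ e) (𝓝[>] (0 : ℝ))
              (𝓝 ((0 : ℂ) ^ e)) := by
            exact ((continuous_pow e).tendsto (0 : ℂ)).comp hofReal
          exact hpw.mul hv_tends
        -- norms
        have hnlim : Tendsto (fun Y : ℝ => ‖((Y : ℝ) : ℂ) ^ e * v ((Y : ℝ) : ℂ)‖)
            (𝓝[>] (0 : ℝ)) (𝓝 ‖(0 : ℂ) ^ e * g μ‖) := hLHS.norm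
        have habslog : Tendsto (fun Y : ℝ => |Real.log Y|) (𝓝[>] (0 : ℝ)) atTop :=
          tendsto_abs_atBot_atTop.comp Real.tendsto_log_nhdsGT_zero
        have hnu : Tendsto (fun Y : ℝ => ‖u ((Y : ℝ) : ℂ)‖) (𝓝[>] (0 : ℝ)) (𝓝 ‖k m‖) :=
          hu_tends.norm
        have hkmpos : 0 < ‖k m‖ := norm_pos_iff.mpr hkm
        have hprod : Tendsto (fun Y : ℝ => ‖u ((Y : ℝ) : ℂ)‖ * |Real.log Y|)
            (𝓝[>] (0 : ℝ)) atTop :=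
          Filter.Tendsto.pos_mul_atTop hkmpos hnu habslog
        have hcongr : ∀ᶠ Y in 𝓝[>] (0 : ℝ),
            ‖((Y : ℝ) : ℂ) ^ e * v ((Y : ℝ) : ℂ)‖
              = ‖u ((Y : ℝ) : ℂ)‖ * |Real.log Y| := by
          filter_upwards [hev3] with Y h1
          rw [h1, norm_neg, norm_mul, Complex.norm_real, Real.norm_eq_abs]
          ring
        have hatTop : Tendsto (fun Y : ℝ => ‖((Y : ℝ) : ℂ) ^ e * v ((Y : ℝ) : ℂ)‖)
            (𝓝[>] (0 : ℝ)) atTop := hprod.congr' (hcongr.mono fun Y h => h.symm)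
        exact not_tendsto_atTop_of_tendsto_nhds hnlim hatTop
  -- FINAL: finite sum manipulation
  intro n hn
  have hSSb : ∀ j : ℕ, S (S bb) j = ((j : ℂ) + 1) * ((j : ℂ) + 2) * bb (j + 2) := by
    intro j
    simp only [S]
    push_cast
    ring_nf
  have hSSf : ∀ j : ℕ, S (S fc) j = ((j : ℂ) + 1) * ((j : ℂ) + 2) * fc (j + 2) := by
    intro j
    simp only [S]
    push_cast
    ring_nf
  have hk2 := hkzero (n - 2)
  rw [hk_def, sub_eq_zero] at hk2
  have hrange : n - 2 + 1 = n - 1 := by omega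
  rw [hrange] at hk2
  -- first sum equals goal LHS
  have hS1 : (∑ p ∈ Finset.range (n - 1), fc p * S (S bb) (n - 2 - p))
      = ((n : ℂ) - 1) * ((n : ℂ) - 2) * cs 1 * bb (n - 1)
        + ∑ p ∈ Finset.Icc 2 (n - 2),
            ((n : ℂ) - (p : ℂ)) * ((n : ℂ) - (p : ℂ) - 1) * cs p * bb (n - p)
              / (Nat.factorial p : ℂ) := by
    have hins : Finset.range (n - 1) = insert 0 (insert 1 (Finset.Icc 2 (n - 2))) := by
      ext x
      simp only [Finset.mem_range, Finset.mem_insert, Finset.mem_Icc]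
      omega
    rw [hins, Finset.sum_insert, Finset.sum_insert]
    · have h0 : fc 0 * S (S bb) (n - 2 - 0) = 0 := by
        simp [hfc_def, hc0]
      rw [h0, zero_add]
      congr 1
      · -- p = 1 term
        rw [hSSb]
        have e1 : n - 2 - 1 = n - 3 := by omega
        rw [e1]
        have e2 : ((n - 3 : ℕ) : ℂ) = (n : ℂ) - 3 := by
          rw [Nat.cast_sub (by omega)]
          norm_num
        have e3 : n - 3 + 2 = n - 1 := by omega
        rw [e2, e3, hfc_def]
        simp only [Nat.factorial_one, Nat.cast_one]
        ring
      · -- Icc sum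
        apply Finset.sum_congr rfl
        intro p hp
        rw [Finset.mem_Icc] at hp
        rw [hSSb]
        have e1 : ((n - 2 - p : ℕ) : ℂ) = (n : ℂ) - (p : ℂ) - 2 := by
          have e0 : n - 2 - p = n - (p + 2) := by omega
          rw [e0, Nat.cast_sub (by omega)]
          push_cast
          ring
        have e3 : n - 2 - p + 2 = n - p := by omega
        rw [e1, e3, hfc_def]
        have hfacne : ((Nat.factorial p : ℕ) : ℂ) ≠ 0 := by
          exact_mod_cast Nat.cast_ne_zero.mpr (Nat.factorial_ne_zero p)
        field_simp
        ring
    · simp only [Finset.mem_Icc]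
      omega
    · simp only [Finset.mem_insert, Finset.mem_Icc]
      omega
  -- second sum equals goal RHS
  have hS2 : (∑ p ∈ Finset.range (n - 1), S (S fc) p * bb (n - 2 - p))
      = ∑ p ∈ Finset.range (n - 2),
          ((p : ℂ) + 2) * ((p : ℂ) + 1) * bb (n - 2 - p) * cs (p + 2)
            / (Nat.factorial (p + 2) : ℂ) := by
    have hsplit : n - 1 = (n - 2) + 1 := by omega
    rw [hsplit, Finset.sum_range_succ]
    have hlast : S (S fc) (n - 2) * bb (n - 2 - (n - 2)) = 0 := by
      simp [hb0]
    rw [hlast, add_zero]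
    apply Finset.sum_congr rfl
    intro p _
    rw [hSSf, hfc_def]
    ring
  rw [hS1, hS2] at hk2
  exact hk2

end MainThm
end

section
/- Let y_c ∈ ℝ, c ∈ ℂ, and let U_s(y) - c = Σ_{n≥1} c_n (y - y_c)^n / n! be a convergent power series on |y - y_c| < R with c_1 ≠ 0. Let (a_n)_{n≥0} and (b_n)_{n≥1} be complex sequences whose power series have positive radius of convergence, with ψ(y) := Σ_{n≥0} a_n (y - y_c)^n + log(y - y_c) · Σ_{n≥1} b_n (y - y_c)^n satisfying (U_s(y) - c) ψ''(y) - U_s''(y) ψ(y) = 0 on an interval (y_c, y_c + σ), σ > 0. Then for every n ≥ 2 the coefficients a_n satisfy: Σ_{p=1}^{n-1} c_p (2n - 2p - 1) b_{n-p} / p! + Σ_{p=0}^{n-3} c_{n-2-p} (p+2)(p+1) a_{p+2} / (n-2-p)! = Σ_{p=0}^{n-2} a_{n-2-p} (p+2)(p+1) c_{p+2} / (p+2)!. -/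
open Filter Topology Finset

namespace RayleighAux5

noncomputable def S (d : ℕ → ℂ) (z : ℂ) : ℂ := ∑' n, d n * z ^ n

noncomputable def sh (d : ℕ → ℂ) : ℕ → ℂ := fun n => ((n : ℂ) + 1) * d (n + 1)

def shf (d : ℕ → ℂ) : ℕ → ℂ := fun n => d (n + 1)

def up (d : ℕ → ℂ) : ℕ → ℂ := fun n => match n with | 0 => 0 | (m+1) => d m

noncomputable def cp (d e : ℕ → ℂ) : ℕ → ℂ :=
  fun n => ∑ k ∈ Finset.range (n + 1), d k * e (n - k)

def Rad (d : ℕ → ℂ) (ρ : ℝ) : Prop := Summable fun n => ‖d n‖ * ρ ^ n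

lemma rad_of_summable {d : ℕ → ℂ} {w : ℂ} (h : Summable fun n => d n * w ^ n)
    {ρ : ℝ} (h0 : 0 ≤ ρ) (hρ : ρ < ‖w‖) : Rad d ρ := by
  have hw : (0:ℝ) < ‖w‖ := lt_of_le_of_lt h0 hρ
  obtain ⟨M, hM⟩ := (h.tendsto_atTop_zero.norm.bddAbove_range).imp
    (fun M hM => fun n => hM (Set.mem_range_self n))
  have hM0 : ∀ n, ‖d n‖ * ‖w‖ ^ n ≤ M := by
    intro n; have := hM n; simpa [norm_mul, norm_pow] using this
  refine Summable.of_nonneg_of_le (fun n => by positivity)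
    (fun n => ?_) (((summable_geometric_of_lt_one (by positivity)
      ((div_lt_one hw).2 hρ)).mul_left M))
  have e : ρ ^ n = (ρ / ‖w‖) ^ n * ‖w‖ ^ n := by
    rw [div_pow, div_mul_cancel₀ _ (by positivity : (‖w‖:ℝ) ^ n ≠ 0)]
  have : ‖d n‖ * ρ ^ n = (‖d n‖ * ‖w‖ ^ n) * (ρ / ‖w‖) ^ n := by rw [e]; ring
  rw [this]
  have := mul_le_mul_of_nonneg_right (hM0 n) (show (0:ℝ) ≤ (ρ / ‖w‖) ^ n by positivity)
  exact this

lemma Rad.mono {d : ℕ → ℂ} {ρ ρ' : ℝ} (h : Rad d ρ) (h0 : 0 ≤ ρ') (hle : ρ' ≤ ρ) :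
    Rad d ρ' :=
  Summable.of_nonneg_of_le (fun n => by positivity)
    (fun n => by gcongr) h

lemma Rad.sh {d : ℕ → ℂ} {ρ ρ' : ℝ} (h : Rad d ρ) (h0 : 0 ≤ ρ') (hlt : ρ' < ρ) :
    Rad (sh d) ρ' := by
  have hρ : (0:ℝ) < ρ := lt_of_le_of_lt h0 hlt
  obtain ⟨M, hM⟩ := (h.tendsto_atTop_zero.bddAbove_range).imp
    (fun M hM => fun n => hM (Set.mem_range_self n))
  have hsum : Summable fun n : ℕ => (M / ρ) * ((n + 1) * (ρ' / ρ) ^ n) := by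
    refine Summable.mul_left _ ?_
    have h1 : Summable fun n : ℕ => (n : ℝ) * (ρ' / ρ) ^ n := by
      simpa using summable_pow_mul_geometric_of_norm_lt_one (R := ℝ) 1
        (by rw [Real.norm_eq_abs, abs_of_nonneg (by positivity)];
            exact (div_lt_one hρ).2 hlt)
    have h2 : Summable fun n : ℕ => (ρ' / ρ) ^ n :=
      summable_geometric_of_lt_one (by positivity) ((div_lt_one hρ).2 hlt)
    simpa [add_mul, one_mul] using h1.add h2
  refine Summable.of_nonneg_of_le (fun n => by positivity) (fun n => ?_) hsum
  have hM' : ‖d (n+1)‖ * ρ ^ (n+1) ≤ M := hM (n+1)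
  have hnorm : ‖RayleighAux5.sh d n‖ = ((n:ℝ) + 1) * ‖d (n+1)‖ := by
    simp only [RayleighAux5.sh, norm_mul]
    congr 1
    rw [show ((n:ℂ) + 1) = ((n+1 : ℕ) : ℂ) by push_cast; ring, Complex.norm_natCast]
    push_cast; ring
  rw [hnorm]
  have key : ((n:ℝ) + 1) * ‖d (n+1)‖ * ρ' ^ n
      = ((n:ℝ) + 1) * (‖d (n+1)‖ * ρ ^ (n+1)) * ((ρ'/ρ) ^ n / ρ) := by
    rw [div_pow, pow_succ]; field_simp
  rw [key, show (M / ρ) * ((n + 1) * (ρ' / ρ) ^ n) = ((n:ℝ)+1) * M * ((ρ'/ρ)^n / ρ) by ring]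
  gcongr

lemma Rad.shf {d : ℕ → ℂ} {ρ : ℝ} (h : Rad d ρ) (h0 : 0 < ρ) : Rad (shf d) ρ := by
  have h1 : Summable fun n : ℕ => ‖d (n + 1)‖ * ρ ^ (n + 1) :=
    (summable_nat_add_iff 1).2 h
  have := h1.mul_left ρ⁻¹
  refine this.congr fun n => ?_
  rw [RayleighAux5.shf]
  field_simp
  ring

lemma Rad.up {d : ℕ → ℂ} {ρ : ℝ} (h : Rad d ρ) (h0 : 0 ≤ ρ) : Rad (up d) ρ := by
  refine (summable_nat_add_iff 1).1 ?_
  have := h.mul_left ρ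
  refine this.congr fun n => ?_
  show ρ * (‖d n‖ * ρ ^ n) = ‖RayleighAux5.up d (n+1)‖ * ρ ^ (n+1)
  show ρ * (‖d n‖ * ρ ^ n) = ‖d n‖ * ρ ^ (n+1)
  ring

lemma summable_S {d : ℕ → ℂ} {ρ : ℝ} (h : Rad d ρ) {z : ℂ} (hz : ‖z‖ ≤ ρ) :
    Summable fun n => d n * z ^ n := by
  refine Summable.of_norm_bounded h fun n => ?_
  rw [norm_mul, norm_pow]
  gcongr


lemma rad_norm_eq {d : ℕ → ℂ} {ρ : ℝ} (h0 : 0 ≤ ρ) :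
    (fun n => ‖d n * (ρ:ℂ) ^ n‖) = fun n => ‖d n‖ * ρ ^ n := by
  funext n
  rw [norm_mul, norm_pow, Complex.norm_real, Real.norm_eq_abs, abs_of_nonneg h0]

lemma Rad.cp {d e : ℕ → ℂ} {ρ : ℝ} (hd : Rad d ρ) (he : Rad e ρ) (h0 : 0 ≤ ρ) :
    Rad (cp d e) ρ := by
  have hd' : Summable fun n => ‖d n * (ρ:ℂ) ^ n‖ := by rw [rad_norm_eq h0]; exact hd
  have he' : Summable fun n => ‖e n * (ρ:ℂ) ^ n‖ := by rw [rad_norm_eq h0]; exact he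
  have key := summable_norm_sum_mul_range_of_summable_norm hd' he'
  refine key.congr fun n => ?_
  have : ∑ k ∈ Finset.range (n + 1), d k * (ρ:ℂ) ^ k * (e (n - k) * (ρ:ℂ) ^ (n - k))
      = RayleighAux5.cp d e n * (ρ:ℂ) ^ n := by
    rw [RayleighAux5.cp, Finset.sum_mul]
    refine Finset.sum_congr rfl fun k hk => ?_
    have hk' : k ≤ n := Nat.lt_succ_iff.1 (Finset.mem_range.1 hk)
    rw [show d k * (ρ:ℂ) ^ k * (e (n - k) * (ρ:ℂ) ^ (n - k))
        = d k * e (n-k) * ((ρ:ℂ)^k * (ρ:ℂ)^(n-k)) by ring, ← pow_add, Nat.add_sub_cancel' hk']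
  rw [this, norm_mul, norm_pow, Complex.norm_real, Real.norm_eq_abs, abs_of_nonneg h0]

lemma S_cp {d e : ℕ → ℂ} {ρ : ℝ} (hd : Rad d ρ) (he : Rad e ρ) {z : ℂ} (hz : ‖z‖ ≤ ρ) :
    S (cp d e) z = S d z * S e z := by
  have h0 : (0:ℝ) ≤ ρ := le_trans (norm_nonneg _) hz
  have hd' : Summable fun n => ‖d n * z ^ n‖ := by
    refine Summable.of_nonneg_of_le (fun n => norm_nonneg _) (fun n => ?_) hd
    rw [norm_mul, norm_pow]; gcongr
  have he' : Summable fun n => ‖e n * z ^ n‖ := by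
    refine Summable.of_nonneg_of_le (fun n => norm_nonneg _) (fun n => ?_) he
    rw [norm_mul, norm_pow]; gcongr
  rw [S, S, S, tsum_mul_tsum_eq_tsum_sum_range_of_summable_norm hd' he']
  refine tsum_congr fun n => ?_
  rw [RayleighAux5.cp, Finset.sum_mul]
  refine Finset.sum_congr rfl fun k hk => ?_
  have hk' : k ≤ n := Nat.lt_succ_iff.1 (Finset.mem_range.1 hk)
  rw [show d k * z ^ k * (e (n - k) * z ^ (n - k))
      = d k * e (n-k) * (z^k * z^(n-k)) by ring, ← pow_add, Nat.add_sub_cancel' hk']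


lemma hasDerivAt_S {d : ℕ → ℂ} {ρ : ℝ} (hd : Rad d ρ) {z : ℂ} (hz : ‖z‖ < ρ) :
    HasDerivAt (S d) (S (sh d) z) z := by
  set ρ' : ℝ := (‖z‖ + ρ) / 2 with hρ'
  have h1 : ‖z‖ < ρ' := by rw [hρ']; linarith
  have h2 : ρ' < ρ := by rw [hρ']; linarith
  have h0' : (0:ℝ) ≤ ρ' := le_trans (norm_nonneg _) h1.le
  have hpos : (0:ℝ) < ρ' := lt_of_le_of_lt (norm_nonneg z) h1
  have hsh : Rad (sh d) ρ' := hd.sh h0' h2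
  have hu : Summable fun n : ℕ => (n:ℝ) * ‖d n‖ * ρ' ^ (n - 1) := by
    refine (summable_nat_add_iff 1).1 ?_
    refine hsh.congr fun n => ?_
    have : ‖RayleighAux5.sh d n‖ = ((n:ℝ) + 1) * ‖d (n+1)‖ := by
      simp only [RayleighAux5.sh, norm_mul]
      congr 1
      rw [show ((n:ℂ) + 1) = ((n+1 : ℕ) : ℂ) by push_cast; ring, Complex.norm_natCast]
      push_cast; ring
    rw [this]
    push_cast
    simp
  have key : ∀ y ∈ Metric.ball (0:ℂ) ρ',
      HasDerivAt (fun w => ∑' n, d n * w ^ n) (∑' n : ℕ, d n * ((n:ℂ) * y ^ (n - 1))) y := by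
    intro y hy
    refine hasDerivAt_tsum_of_isPreconnected hu Metric.isOpen_ball
      (convex_ball (0:ℂ) ρ').isPreconnected
      (g := fun n w => d n * w ^ n) (g' := fun n w => d n * ((n:ℂ) * w ^ (n - 1)))
      (fun n w _ => (hasDerivAt_pow n w).const_mul (d n)) (fun n w hw => ?_)
      (Metric.mem_ball_self hpos) ?_ hy
    · rw [norm_mul, norm_mul, norm_pow, Complex.norm_natCast]
      calc ‖d n‖ * ((n:ℝ) * ‖w‖ ^ (n-1)) ≤ ‖d n‖ * ((n:ℝ) * ρ' ^ (n-1)) := by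
            gcongr
            · exact le_of_lt (by simpa [Complex.dist_eq] using hw)
        _ = (n:ℝ) * ‖d n‖ * ρ' ^ (n - 1) := by ring
    · exact summable_S (hd.mono h0' h2.le) (by simpa using h0')
  have hz' : z ∈ Metric.ball (0:ℂ) ρ' := by simpa [Complex.dist_eq] using h1
  have hder := key z hz'
  have hsum' : Summable fun n : ℕ => d n * ((n:ℂ) * z ^ (n - 1)) := by
    refine Summable.of_norm_bounded hu fun n => ?_
    rw [norm_mul, norm_mul, norm_pow, Complex.norm_natCast]
    calc ‖d n‖ * ((n:ℝ) * ‖z‖ ^ (n-1)) ≤ ‖d n‖ * ((n:ℝ) * ρ' ^ (n-1)) := by gcongr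
      _ = (n:ℝ) * ‖d n‖ * ρ' ^ (n - 1) := by ring
  have : (∑' n : ℕ, d n * ((n:ℂ) * z ^ (n - 1))) = S (sh d) z := by
    rw [hsum'.tsum_eq_zero_add]
    simp only [Nat.cast_zero, zero_mul, mul_zero, zero_add]
    refine tsum_congr fun n => ?_
    rw [RayleighAux5.sh]
    push_cast
    ring_nf
  rw [← this]
  exact hder

lemma S_zero (d : ℕ → ℂ) : S d 0 = d 0 := by
  rw [S, tsum_eq_single 0 (fun n hn => by simp [zero_pow hn])]
  simp

lemma S_shf {d : ℕ → ℂ} {ρ : ℝ} (hd : Rad d ρ) {z : ℂ} (hz : ‖z‖ ≤ ρ) :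
    S d z = d 0 + z * S (shf d) z := by
  rw [S, (summable_S hd hz).tsum_eq_zero_add]
  simp only [pow_zero, mul_one]
  congr 1
  rw [S, ← tsum_mul_left]
  refine tsum_congr fun n => ?_
  rw [RayleighAux5.shf]
  ring

lemma S_up {d : ℕ → ℂ} {ρ : ℝ} (hd : Rad d ρ) {z : ℂ} (hz : ‖z‖ ≤ ρ) :
    S (up d) z = z * S d z := by
  have h0 : (0:ℝ) ≤ ρ := le_trans (norm_nonneg _) hz
  have : shf (up d) = d := by funext n; rfl
  rw [S_shf (hd.up h0) hz, this]
  show (0:ℂ) + z * S d z = z * S d z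
  rw [zero_add]

lemma tendsto_S_zero {d : ℕ → ℂ} {ρ : ℝ} (hd : Rad d ρ) (h0 : 0 < ρ) :
    Tendsto (fun Y : ℝ => S d (Y:ℂ)) (nhdsWithin 0 (Set.Ioi 0)) (nhds (d 0)) := by
  have hc : ContinuousAt (S d) 0 := (hasDerivAt_S hd (by simpa using h0)).continuousAt
  have h2 : Tendsto (fun Y : ℝ => (Y:ℂ)) (nhdsWithin 0 (Set.Ioi 0)) (nhds 0) := by
    have := (Complex.continuous_ofReal.tendsto 0).mono_left
      (nhdsWithin_le_nhds (s := Set.Ioi (0:ℝ)))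
    simpa using this
  have := hc.tendsto.comp h2
  rwa [S_zero] at this


lemma extraction_zero {d e : ℕ → ℂ} {ρ ε : ℝ} (hρ : 0 < ρ) (hd : Rad d ρ) (he : Rad e ρ)
    (hε : 0 < ε) (hε' : ε ≤ ρ)
    (h : ∀ Y : ℝ, 0 < Y → Y < ε →
      S d (Y:ℂ) + (Real.log Y : ℂ) * S e (Y:ℂ) = 0) :
    d 0 = 0 ∧ e 0 = 0 := by
  have hevε : ∀ᶠ Y in nhdsWithin (0:ℝ) (Set.Ioi 0), 0 < Y ∧ Y < ε := by
    filter_upwards [self_mem_nhdsWithin,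
      eventually_nhdsWithin_of_eventually_nhds (eventually_lt_nhds hε)] with Y h1 h2
    exact ⟨h1, h2⟩
  have hev1 : ∀ᶠ Y in nhdsWithin (0:ℝ) (Set.Ioi 0), Y < 1 := by
    exact eventually_nhdsWithin_of_eventually_nhds (eventually_lt_nhds one_pos)
  have hlog : Tendsto (fun Y : ℝ => (Real.log Y : ℂ) * S e (Y:ℂ))
      (nhdsWithin 0 (Set.Ioi 0)) (nhds (-(d 0))) := by
    have h1 : (fun Y : ℝ => (Real.log Y : ℂ) * S e (Y:ℂ))
        =ᶠ[nhdsWithin (0:ℝ) (Set.Ioi 0)] fun Y => -(S d (Y:ℂ)) := by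
      filter_upwards [hevε] with Y hY
      have := h Y hY.1 hY.2
      linear_combination this
    exact ((tendsto_S_zero hd hρ).neg).congr' h1.symm
  have hinv : Tendsto (fun Y : ℝ => ((Real.log Y : ℂ))⁻¹)
      (nhdsWithin (0:ℝ) (Set.Ioi 0)) (nhds 0) := by
    have h1 : Tendsto (fun Y : ℝ => (Real.log Y)⁻¹)
        (nhdsWithin (0:ℝ) (Set.Ioi 0)) (nhds 0) := by
      have h2 : Tendsto (fun Y : ℝ => -Real.log Y)
          (nhdsWithin (0:ℝ) (Set.Ioi 0)) atTop :=
        tendsto_neg_atBot_atTop.comp Real.tendsto_log_nhdsGT_zero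
      have h3 := tendsto_inv_atTop_zero.comp h2
      have h4 : (fun Y : ℝ => (-Real.log Y)⁻¹) = fun Y => -(Real.log Y)⁻¹ := by
        funext Y; rw [inv_neg]
      rw [Function.comp_def, h4] at h3
      simpa using h3.neg
    have := (Complex.continuous_ofReal.tendsto 0).comp h1
    refine this.congr fun Y => ?_
    simp [Function.comp, Complex.ofReal_inv]
  have he0 : e 0 = 0 := by
    have h2 : (fun Y : ℝ => S e (Y:ℂ)) =ᶠ[nhdsWithin (0:ℝ) (Set.Ioi 0)]
        fun Y => ((Real.log Y : ℂ) * S e (Y:ℂ)) * ((Real.log Y : ℂ))⁻¹ := by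
      filter_upwards [hevε, hev1] with Y hY hY1
      have hlogne : (Real.log Y : ℂ) ≠ 0 := by
        have : Real.log Y ≠ 0 := ne_of_lt (Real.log_neg hY.1 hY1)
        simpa using this
      rw [mul_comm ((Real.log Y : ℂ)) (S e (Y:ℂ)), mul_assoc,
        mul_inv_cancel₀ hlogne, mul_one]
    have h3 := (hlog.mul hinv).congr' h2.symm
    have h4 := tendsto_S_zero he hρ
    have := tendsto_nhds_unique h4 h3
    simpa using this
  refine ⟨?_, he0⟩
  have hse : ∀ᶠ Y : ℝ in nhdsWithin (0:ℝ) (Set.Ioi 0),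
      S e (Y:ℂ) = (Y:ℂ) * S (shf e) (Y:ℂ) := by
    filter_upwards [hevε] with Y hY
    have hYρ : ‖((Y:ℝ):ℂ)‖ ≤ ρ := by
      rw [Complex.norm_real, Real.norm_eq_abs, abs_of_pos hY.1]
      linarith [hY.2]
    rw [S_shf he hYρ, he0, zero_add]
  have h4 : (fun Y : ℝ => (Real.log Y : ℂ) * S e (Y:ℂ))
      =ᶠ[nhdsWithin (0:ℝ) (Set.Ioi 0)]
      fun Y => ((Y:ℂ) * (Real.log Y : ℂ)) * S (shf e) (Y:ℂ) := by
    filter_upwards [hse] with Y hY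
    rw [hY]
    ring
  have h5 : Tendsto (fun Y : ℝ => ((Y:ℂ) * (Real.log Y : ℂ)))
      (nhdsWithin (0:ℝ) (Set.Ioi 0)) (nhds 0) := by
    have h6 : Tendsto (fun Y : ℝ => Y * Real.log Y) (nhdsWithin (0:ℝ) (Set.Ioi 0))
        (nhds 0) := by
      have := (Real.continuous_mul_log.tendsto 0).mono_left
        (nhdsWithin_le_nhds (s := Set.Ioi (0:ℝ)))
      simpa using this
    have := (Complex.continuous_ofReal.tendsto 0).comp h6
    refine (this.congr fun Y => ?_).mono_right (by simp)
    simp [Function.comp, Complex.ofReal_mul]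
  have h7 := h5.mul (tendsto_S_zero (he.shf hρ) hρ)
  rw [zero_mul] at h7
  have h8 := h7.congr' h4.symm
  have h9 := tendsto_nhds_unique hlog h8
  exact neg_eq_zero.mp h9


lemma extraction {ρ ε : ℝ} (hρ : 0 < ρ) (hε : 0 < ε) (hε' : ε ≤ ρ) :
    ∀ n : ℕ, ∀ d e : ℕ → ℂ, Rad d ρ → Rad e ρ →
      (∀ Y : ℝ, 0 < Y → Y < ε →
        S d (Y:ℂ) + (Real.log Y : ℂ) * S e (Y:ℂ) = 0) →
      d n = 0 ∧ e n = 0 := by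
  intro n
  induction n with
  | zero =>
    intro d e hd he h
    exact extraction_zero hρ hd he hε hε' h
  | succ m ih =>
    intro d e hd he h
    obtain ⟨hd0, he0⟩ := extraction_zero hρ hd he hε hε' h
    have hstep : ∀ Y : ℝ, 0 < Y → Y < ε →
        S (shf d) (Y:ℂ) + (Real.log Y : ℂ) * S (shf e) (Y:ℂ) = 0 := by
      intro Y h1 h2
      have hYρ : ‖((Y:ℝ):ℂ)‖ ≤ ρ := by
        rw [Complex.norm_real, Real.norm_eq_abs, abs_of_pos h1]
        linarith
      have e1 : S d (Y:ℂ) = (Y:ℂ) * S (shf d) (Y:ℂ) := by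
        rw [S_shf hd hYρ, hd0, zero_add]
      have e2 : S e (Y:ℂ) = (Y:ℂ) * S (shf e) (Y:ℂ) := by
        rw [S_shf he hYρ, he0, zero_add]
      have heq := h Y h1 h2
      rw [e1, e2] at heq
      have hY : (Y:ℂ) ≠ 0 := by
        simpa using ne_of_gt h1
      have hfac : (Y:ℂ) * (S (shf d) (Y:ℂ) + (Real.log Y : ℂ) * S (shf e) (Y:ℂ)) = 0 := by
        linear_combination heq
      exact (mul_eq_zero.1 hfac).resolve_left hY
    exact ih (shf d) (shf e) (hd.shf hρ) (he.shf hρ) hstep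


lemma Rad.add {d e : ℕ → ℂ} {ρ : ℝ} (hd : Rad d ρ) (he : Rad e ρ) (h0 : 0 ≤ ρ) :
    Rad (fun n => d n + e n) ρ := by
  refine Summable.of_nonneg_of_le (fun n => by positivity) (fun n => ?_) (Summable.add hd he)
  calc ‖d n + e n‖ * ρ ^ n ≤ (‖d n‖ + ‖e n‖) * ρ ^ n := by
        gcongr; exact norm_add_le _ _
    _ = ‖d n‖ * ρ ^ n + ‖e n‖ * ρ ^ n := by ring

lemma Rad.sub {d e : ℕ → ℂ} {ρ : ℝ} (hd : Rad d ρ) (he : Rad e ρ) (h0 : 0 ≤ ρ) :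
    Rad (fun n => d n - e n) ρ := by
  refine Summable.of_nonneg_of_le (fun n => by positivity) (fun n => ?_) (Summable.add hd he)
  calc ‖d n - e n‖ * ρ ^ n ≤ (‖d n‖ + ‖e n‖) * ρ ^ n := by
        gcongr; exact norm_sub_le _ _
    _ = ‖d n‖ * ρ ^ n + ‖e n‖ * ρ ^ n := by ring

lemma Rad.const_mul {d : ℕ → ℂ} {ρ : ℝ} (a : ℂ) (hd : Rad d ρ) (h0 : 0 ≤ ρ) :
    Rad (fun n => a * d n) ρ := by
  refine ((hd.mul_left ‖a‖).congr fun n => ?_)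
  rw [norm_mul]; ring

lemma S_add {d e : ℕ → ℂ} {ρ : ℝ} (hd : Rad d ρ) (he : Rad e ρ) {z : ℂ} (hz : ‖z‖ ≤ ρ) :
    S (fun n => d n + e n) z = S d z + S e z := by
  rw [S, S, S, ← Summable.tsum_add (summable_S hd hz) (summable_S he hz)]
  exact tsum_congr fun n => by ring

lemma S_sub {d e : ℕ → ℂ} {ρ : ℝ} (hd : Rad d ρ) (he : Rad e ρ) {z : ℂ} (hz : ‖z‖ ≤ ρ) :
    S (fun n => d n - e n) z = S d z - S e z := by
  rw [S, S, S, ← Summable.tsum_sub (summable_S hd hz) (summable_S he hz)]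
  exact tsum_congr fun n => by ring

lemma S_const_mul (d : ℕ → ℂ) (a : ℂ) (z : ℂ) :
    S (fun n => a * d n) z = a * S d z := by
  rw [S, S, ← tsum_mul_left]
  exact tsum_congr fun n => by ring

lemma hasDerivAt_S_real {d : ℕ → ℂ} {ρ : ℝ} (hd : Rad d ρ) (y_c : ℝ) {t : ℝ}
    (ht : |t - y_c| < ρ) :
    HasDerivAt (fun s : ℝ => S d ((s:ℂ) - (y_c:ℂ))) (S (sh d) ((t:ℂ) - (y_c:ℂ))) t := by
  have hnorm : ‖(t:ℂ) - (y_c:ℂ)‖ < ρ := by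
    rw [show (t:ℂ) - (y_c:ℂ) = ((t - y_c : ℝ) : ℂ) by push_cast; ring, Complex.norm_real,
      Real.norm_eq_abs]
    exact ht
  have h1 : HasDerivAt (fun z : ℂ => S d (z - (y_c:ℂ))) (S (sh d) ((t:ℂ) - (y_c:ℂ))) (t:ℂ) := by
    have := (hasDerivAt_S hd hnorm).comp (t:ℂ) ((hasDerivAt_id ((t:ℂ))).sub_const (y_c:ℂ))
    simpa [Function.comp_def] using this
  exact h1.comp_ofReal


lemma comb1 (cs aa : ℕ → ℂ) (m : ℕ) :
    cp (sh (sh (fun k => cs k / (Nat.factorial k : ℂ)))) aa m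
      = ∑ p ∈ Finset.range (m+1),
          aa (m - p) * ((p:ℂ)+2) * ((p:ℂ)+1) * cs (p+2) / (Nat.factorial (p+2) : ℂ) := by
  rw [cp]
  refine Finset.sum_congr rfl fun k hk => ?_
  show RayleighAux5.sh (RayleighAux5.sh fun k => cs k / (Nat.factorial k : ℂ)) k * aa (m - k) = _
  rw [RayleighAux5.sh, RayleighAux5.sh]
  push_cast
  ring

lemma comb2 (cs aa : ℕ → ℂ) (hc0 : cs 0 = 0) (m : ℕ) :
    cp (fun k => cs k / (Nat.factorial k : ℂ)) (sh (sh aa)) m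
      = ∑ p ∈ Finset.range m,
          cs (m - p) * ((p:ℂ)+2) * ((p:ℂ)+1) * aa (p+2) / (Nat.factorial (m-p) : ℂ) := by
  rw [cp]
  have hrefl := Finset.sum_range_reflect
    (fun k => (fun k => cs k / (Nat.factorial k : ℂ)) k * RayleighAux5.sh (RayleighAux5.sh aa) (m - k)) (m+1)
  simp only [Nat.add_sub_cancel] at hrefl
  rw [← hrefl]
  rw [Finset.sum_range_succ]
  have hlast : cs (m - m) / (Nat.factorial (m - m) : ℂ) * RayleighAux5.sh (RayleighAux5.sh aa) (m - (m - m)) = 0 := by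
    simp [hc0]
  rw [hlast, add_zero]
  refine Finset.sum_congr rfl fun j hj => ?_
  have hjm : j ≤ m := le_of_lt (Finset.mem_range.1 hj)
  have h1 : m - (m - j) = j := Nat.sub_sub_self hjm
  rw [h1, RayleighAux5.sh, RayleighAux5.sh]
  push_cast
  ring

lemma comb3 (cs bb : ℕ → ℂ) (hc0 : cs 0 = 0) (hb0 : bb 0 = 0) (m : ℕ) :
    2 * cp (fun k => cs k / (Nat.factorial k : ℂ)) (sh bb) (m+1)
        - cp (fun k => cs k / (Nat.factorial k : ℂ)) bb (m+2)
      = ∑ p ∈ Finset.Icc 1 (m+1),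
          cs p * (2*((m:ℂ)+2) - 2*(p:ℂ) - 1) * bb (m+2-p) / (Nat.factorial p : ℂ) := by
  rw [cp, cp]
  rw [Finset.sum_range_succ (fun k => cs k / (Nat.factorial k : ℂ) * bb (m + 2 - k)) (m+2)]
  rw [show m + 2 - (m + 2) = 0 by omega, hb0, mul_zero, add_zero]
  rw [Finset.mul_sum, ← Finset.sum_sub_distrib]
  -- now a single sum over range (m+2)
  have hIcc : ∑ p ∈ Finset.Icc 1 (m+1),
      cs p * (2*((m:ℂ)+2) - 2*(p:ℂ) - 1) * bb (m+2-p) / (Nat.factorial p : ℂ)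
      = ∑ p ∈ Finset.range (m+1),
      cs (p+1) * (2*((m:ℂ)+2) - 2*((p:ℂ)+1) - 1) * bb (m+2-(p+1)) / (Nat.factorial (p+1) : ℂ) := by
    refine Finset.sum_nbij' (fun p => p - 1) (fun p => p + 1) ?_ ?_ ?_ ?_ ?_
    · intro a ha
      simp only [Finset.mem_Icc] at ha
      simp only [Finset.mem_range]
      omega
    · intro a ha
      simp only [Finset.mem_range] at ha
      simp only [Finset.mem_Icc]
      omega
    · intro a ha
      simp only [Finset.mem_Icc] at ha
      omega
    · intro a ha
      simp only [Finset.mem_range] at ha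
      omega
    · intro a ha
      simp only [Finset.mem_Icc] at ha
      have h1 : a - 1 + 1 = a := by omega
      rw [h1]
      have h2 : ((a - 1 : ℕ) : ℂ) = (a : ℂ) - 1 := by
        have : (1:ℕ) ≤ a := ha.1
        push_cast [Nat.cast_sub this]
        ring
      rw [h2]
      ring_nf
  rw [hIcc]
  rw [Finset.sum_range_succ' (fun k =>
    2 * (cs k / (Nat.factorial k : ℂ) * RayleighAux5.sh bb (m + 1 - k))
      - cs k / (Nat.factorial k : ℂ) * bb (m + 2 - k)) (m+1)]
  rw [show (2 * (cs 0 / (Nat.factorial 0 : ℂ) * RayleighAux5.sh bb (m + 1 - 0))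
      - cs 0 / (Nat.factorial 0 : ℂ) * bb (m + 2 - 0)) = 0 by simp [hc0], add_zero]
  refine Finset.sum_congr rfl fun i hi => ?_
  have him : i ≤ m := by
    have := Finset.mem_range.1 hi; omega
  have h1 : m + 1 - (i + 1) = m - i := by omega
  have h2 : m + 2 - (i + 1) = m - i + 1 := by omega
  rw [h1, h2, RayleighAux5.sh]
  have h3 : ((m - i : ℕ) : ℂ) = (m : ℂ) - (i : ℂ) := by
    push_cast [Nat.cast_sub him]; ring
  rw [h3]
  push_cast
  ring


end RayleighAux5

open RayleighAux5 in
/-- If `ψ(y) = Σ aₙ (y-y_c)ⁿ + log(y-y_c) Σ bₙ (y-y_c)ⁿ` solves the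
Rayleigh equation `(U_s - c) ψ'' - U_s'' ψ = 0` on `(y_c, y_c + σ)`, then for every
`n ≥ 2` the coefficients `aₙ` satisfy
`Σ_{p=1}^{n-1} cₚ (2n-2p-1) b_{n-p}/p! + Σ_{p=0}^{n-3} c_{n-2-p}(p+2)(p+1) a_{p+2}/(n-2-p)!
  = Σ_{p=0}^{n-2} a_{n-2-p}(p+2)(p+1) c_{p+2}/(p+2)!`. -/
theorem rayleigh_log_series_a_recursion
    (y_c : ℝ) (c : ℂ) (R : ℝ) (hR : 0 < R)
    (U : ℝ → ℂ) (cs : ℕ → ℂ) (hc0 : cs 0 = 0) (hc1ne : cs 1 ≠ 0)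
    (hU : ∀ y : ℝ, |y - y_c| < R →
      HasSum (fun n : ℕ => cs n * ((y : ℂ) - (y_c : ℂ)) ^ n / (Nat.factorial n : ℂ))
        (U y - c))
    (aa bb : ℕ → ℂ) (hb0 : bb 0 = 0)
    (r : ℝ) (hr : 0 < r)
    (hconv : ∀ Y : ℂ, ‖Y‖ < r →
      Summable (fun n : ℕ => aa n * Y ^ n) ∧ Summable (fun n : ℕ => bb n * Y ^ n))
    (σ : ℝ) (hσ : 0 < σ)
    (heq : ∀ y : ℝ, y_c < y → y < y_c + σ →
      (U y - c) *
          deriv (deriv (fun t : ℝ =>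
            (∑' n : ℕ, aa n * ((t : ℂ) - (y_c : ℂ)) ^ n)
              + (Real.log (t - y_c) : ℂ)
                  * (∑' n : ℕ, bb n * ((t : ℂ) - (y_c : ℂ)) ^ n))) y
        - deriv (deriv U) y *
          ((∑' n : ℕ, aa n * ((y : ℂ) - (y_c : ℂ)) ^ n)
              + (Real.log (y - y_c) : ℂ)
                  * (∑' n : ℕ, bb n * ((y : ℂ) - (y_c : ℂ)) ^ n)) = 0) :
    ∀ n : ℕ, 2 ≤ n →
      (∑ p ∈ Finset.Icc 1 (n - 1),
          cs p * (2 * (n : ℂ) - 2 * (p : ℂ) - 1) * bb (n - p) / (Nat.factorial p : ℂ))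
        + ∑ p ∈ Finset.range (n - 2),
            cs (n - 2 - p) * ((p : ℂ) + 2) * ((p : ℂ) + 1) * aa (p + 2)
              / (Nat.factorial (n - 2 - p) : ℂ)
      = ∑ p ∈ Finset.range (n - 1),
          aa (n - 2 - p) * ((p : ℂ) + 2) * ((p : ℂ) + 1) * cs (p + 2)
            / (Nat.factorial (p + 2) : ℂ) := by
  intro n hn
  obtain ⟨m, rfl⟩ : ∃ m, n = m + 2 := ⟨n - 2, by omega⟩
  set C : ℕ → ℂ := fun k => cs k / (Nat.factorial k : ℂ) with hCdef
  -- summability at sample points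
  have hCsum : Summable (fun k => C k * (((R/2 : ℝ)) : ℂ) ^ k) := by
    have habs : |(y_c + R/2) - y_c| < R := by
      rw [add_sub_cancel_left, abs_of_pos (by linarith)]; linarith
    have h1 := (hU (y_c + R/2) habs).summable
    have h2 : ((y_c + R/2 : ℝ) : ℂ) - (y_c : ℂ) = ((R/2 : ℝ) : ℂ) := by push_cast; ring
    rw [h2] at h1
    exact h1.congr fun k => by rw [hCdef]; ring
  have hAsum : Summable (fun k => aa k * (((r/2 : ℝ)) : ℂ) ^ k) := by
    refine (hconv ((r/2 : ℝ) : ℂ) ?_).1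
    rw [Complex.norm_real, Real.norm_eq_abs, abs_of_pos (by linarith)]; linarith
  have hBsum : Summable (fun k => bb k * (((r/2 : ℝ)) : ℂ) ^ k) := by
    refine (hconv ((r/2 : ℝ) : ℂ) ?_).2
    rw [Complex.norm_real, Real.norm_eq_abs, abs_of_pos (by linarith)]; linarith
  set ρ0 : ℝ := min (R/2) (r/2) with hρ0def
  have hρ0pos : 0 < ρ0 := lt_min (by linarith) (by linarith)
  -- radii
  have hnR : ρ0 / 2 < ‖(((R/2:ℝ)) : ℂ)‖ := by
    rw [Complex.norm_real, Real.norm_eq_abs, abs_of_pos (by linarith)]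
    have := min_le_left (R/2) (r/2); linarith
  have hnr : ρ0 / 2 < ‖(((r/2:ℝ)) : ℂ)‖ := by
    rw [Complex.norm_real, Real.norm_eq_abs, abs_of_pos (by linarith)]
    have := min_le_right (R/2) (r/2); linarith
  have hRadC1 : Rad C (ρ0/2) := rad_of_summable hCsum (by positivity) hnR
  have hRadA1 : Rad aa (ρ0/2) := rad_of_summable hAsum (by positivity) hnr
  have hRadB1 : Rad bb (ρ0/2) := rad_of_summable hBsum (by positivity) hnr
  have hRadshC : Rad (sh C) (ρ0/4) := hRadC1.sh (by positivity) (by linarith)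
  have hRadshA : Rad (sh aa) (ρ0/4) := hRadA1.sh (by positivity) (by linarith)
  have hRadshB : Rad (sh bb) (ρ0/4) := hRadB1.sh (by positivity) (by linarith)
  set ρ : ℝ := ρ0/8 with hρdef
  have hρpos : 0 < ρ := by positivity
  have hRadC2 : Rad (sh (sh C)) ρ := hRadshC.sh (by positivity) (by rw [hρdef]; linarith)
  have hRadF : Rad (sh (sh aa)) ρ := hRadshA.sh (by positivity) (by rw [hρdef]; linarith)
  have hRadG2 : Rad (sh (sh bb)) ρ := hRadshB.sh (by positivity) (by rw [hρdef]; linarith)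
  have hC : Rad C ρ := hRadC1.mono hρpos.le (by rw [hρdef]; linarith)
  have hA : Rad aa ρ := hRadA1.mono hρpos.le (by rw [hρdef]; linarith)
  have hB : Rad bb ρ := hRadB1.mono hρpos.le (by rw [hρdef]; linarith)
  have hshB : Rad (sh bb) ρ := hRadshB.mono hρpos.le (by rw [hρdef]; linarith)
  -- Cauchy products
  have hX1 : Rad (cp C (sh (sh aa))) ρ := hC.cp hRadF hρpos.le
  have hX2 : Rad (cp C (sh bb)) ρ := hC.cp hshB hρpos.le
  have hX3 : Rad (cp C bb) ρ := hC.cp hB hρpos.le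
  have hX4 : Rad (cp (sh (sh C)) aa) ρ := hRadC2.cp hA hρpos.le
  have hX5 : Rad (cp C (sh (sh bb))) ρ := hC.cp hRadG2 hρpos.le
  have hX6 : Rad (cp (sh (sh C)) bb) ρ := hRadC2.cp hB hρpos.le
  set Pc : ℕ → ℂ := fun k => up (up (cp C (sh (sh aa)))) k
      + (2 * up (cp C (sh bb)) k - cp C bb k) - up (up (cp (sh (sh C)) aa)) k with hPcdef
  set Qc : ℕ → ℂ := fun k =>
      up (up (cp C (sh (sh bb)))) k - up (up (cp (sh (sh C)) bb)) k with hQcdef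
  have hRadPc : Rad Pc ρ := by
    refine Rad.sub (Rad.add ((hX1.up hρpos.le).up hρpos.le)
      (Rad.sub (Rad.const_mul 2 (hX2.up hρpos.le) hρpos.le) hX3 hρpos.le) hρpos.le)
      ((hX4.up hρpos.le).up hρpos.le) hρpos.le
  have hRadQc : Rad Qc ρ := by
    refine Rad.sub ((hX5.up hρpos.le).up hρpos.le) ((hX6.up hρpos.le).up hρpos.le) hρpos.le
  set ε : ℝ := min ρ σ with hεdef
  have hεpos : 0 < ε := lt_min hρpos hσ
  have hερ : ε ≤ ρ := min_le_left _ _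
  have hρR : ρ < R := by
    have := min_le_left (R/2) (r/2)
    rw [hρdef]; linarith
  have hρ1 : ρ < ρ0/2 := by rw [hρdef]; linarith
  have hρ2 : ρ < ρ0/4 := by rw [hρdef]; linarith
  -- U equals power series on |t - y_c| < R
  have hUeq : ∀ t : ℝ, |t - y_c| < R → U t = c + S C ((t:ℂ) - (y_c:ℂ)) := by
    intro t ht
    have h1 := (hU t ht).tsum_eq
    have h2 : S C ((t:ℂ) - (y_c:ℂ))
        = ∑' k, cs k * ((t:ℂ) - (y_c:ℂ)) ^ k / (Nat.factorial k : ℂ) := by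
      rw [S]; exact tsum_congr fun k => by rw [hCdef]; ring
    rw [h2, h1]; ring
  have hUev : ∀ t : ℝ, |t - y_c| < ρ → deriv U t = S (sh C) ((t:ℂ) - (y_c:ℂ)) := by
    intro t ht
    have hcont : ContinuousAt (fun s : ℝ => |s - y_c|) t :=
      ((continuous_id.sub continuous_const).abs).continuousAt
    have hev : U =ᶠ[nhds t] (fun s : ℝ => c + S C ((s:ℂ) - (y_c:ℂ))) := by
      filter_upwards [hcont.eventually_lt_const (lt_trans ht hρR)] with s hs
      exact hUeq s hs
    rw [hev.deriv_eq]
    exact ((hasDerivAt_S_real hRadC1 y_c (lt_trans ht hρ1)).const_add c).deriv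
  have hkey : ∀ Y : ℝ, 0 < Y → Y < ε →
      S Pc ((Y:ℝ):ℂ) + (Real.log Y : ℂ) * S Qc ((Y:ℝ):ℂ) = 0 := by
    intro Y hY1 hY2
    set y : ℝ := y_c + Y with hydef
    have hy1 : y_c < y := by rw [hydef]; linarith
    have hy2 : y < y_c + σ := by
      have := lt_of_lt_of_le hY2 (min_le_right ρ σ); rw [hydef]; linarith
    have hYρ : Y < ρ := lt_of_lt_of_le hY2 (min_le_left ρ σ)
    set z : ℂ := ((Y:ℝ):ℂ) with hzdef
    have hYcz : (y:ℂ) - (y_c:ℂ) = z := by rw [hydef, hzdef]; push_cast; ring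
    have hzne : z ≠ 0 := by rw [hzdef]; simpa using ne_of_gt hY1
    have hznorm : ‖z‖ = Y := by
      rw [hzdef, Complex.norm_real, Real.norm_eq_abs, abs_of_pos hY1]
    have hzle : ‖z‖ ≤ ρ := by rw [hznorm]; exact hYρ.le
    have hyabs : |y - y_c| < ρ := by
      rw [hydef, add_sub_cancel_left, abs_of_pos hY1]; exact hYρ
    -- second derivative of U
    have hddU : deriv (deriv U) y = S (sh (sh C)) z := by
      have hcont : ContinuousAt (fun s : ℝ => |s - y_c|) y :=
        ((continuous_id.sub continuous_const).abs).continuousAt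
      have hev : deriv U =ᶠ[nhds y] (fun s : ℝ => S (sh C) ((s:ℂ) - (y_c:ℂ))) := by
        filter_upwards [hcont.eventually_lt_const hyabs] with s hs
        exact hUev s hs
      rw [hev.deriv_eq, ← hYcz]
      exact (hasDerivAt_S_real hRadshC y_c (lt_trans hyabs hρ2)).deriv
    -- first derivative of ψ
    have hψ' : ∀ t : ℝ, y_c < t → t - y_c < ρ →
        HasDerivAt (fun s : ℝ => S aa ((s:ℂ) - (y_c:ℂ))
            + ((Real.log (s - y_c) : ℝ) : ℂ) * S bb ((s:ℂ) - (y_c:ℂ)))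
          (S (sh aa) ((t:ℂ) - (y_c:ℂ))
            + ((((t:ℂ) - (y_c:ℂ))⁻¹) * S bb ((t:ℂ) - (y_c:ℂ))
              + ((Real.log (t - y_c) : ℝ) : ℂ) * S (sh bb) ((t:ℂ) - (y_c:ℂ)))) t := by
      intro t ht1 ht2
      have habs : |t - y_c| < ρ0/2 := by
        rw [abs_of_pos (by linarith)]; linarith
      have h1 := hasDerivAt_S_real hRadA1 y_c habs
      have h2 := hasDerivAt_S_real hRadB1 y_c habs
      have hlog : HasDerivAt (fun s : ℝ => ((Real.log (s - y_c) : ℝ) : ℂ))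
          (((t:ℂ) - (y_c:ℂ))⁻¹) t := by
        have hne : t - y_c ≠ 0 := ne_of_gt (by linarith)
        have hr' : HasDerivAt (fun s : ℝ => Real.log (s - y_c)) ((t - y_c)⁻¹) t := by
          have := (Real.hasDerivAt_log hne).comp t ((hasDerivAt_id t).sub_const y_c)
          simpa [Function.comp_def] using this
        have h3 := hr'.ofReal_comp
        convert h3 using 1
        push_cast; ring
      exact h1.add (hlog.mul h2)
    -- derivative of the derivative
    have hψ1 : ∀ t : ℝ, y_c < t → t - y_c < ρ →
        HasDerivAt (fun s : ℝ => S (sh aa) ((s:ℂ) - (y_c:ℂ))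
            + ((((s:ℂ) - (y_c:ℂ))⁻¹) * S bb ((s:ℂ) - (y_c:ℂ))
              + ((Real.log (s - y_c) : ℝ) : ℂ) * S (sh bb) ((s:ℂ) - (y_c:ℂ))))
          (S (sh (sh aa)) ((t:ℂ) - (y_c:ℂ))
            + ((-(((t:ℂ) - (y_c:ℂ)) ^ 2)⁻¹ * S bb ((t:ℂ) - (y_c:ℂ))
                + (((t:ℂ) - (y_c:ℂ))⁻¹) * S (sh bb) ((t:ℂ) - (y_c:ℂ)))
              + ((((t:ℂ) - (y_c:ℂ))⁻¹) * S (sh bb) ((t:ℂ) - (y_c:ℂ))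
                + ((Real.log (t - y_c) : ℝ) : ℂ)
                  * S (sh (sh bb)) ((t:ℂ) - (y_c:ℂ))))) t := by
      intro t ht1 ht2
      have habs4 : |t - y_c| < ρ0/4 := by
        rw [abs_of_pos (by linarith)]; linarith
      have habs2 : |t - y_c| < ρ0/2 := by
        rw [abs_of_pos (by linarith)]; linarith
      have h1 := hasDerivAt_S_real hRadshA y_c habs4
      have h2 := hasDerivAt_S_real hRadB1 y_c habs2
      have h3 := hasDerivAt_S_real hRadshB y_c habs4
      have hnec : (t:ℂ) - (y_c:ℂ) ≠ 0 := by
        rw [show (t:ℂ) - (y_c:ℂ) = ((t - y_c : ℝ) : ℂ) by push_cast; ring]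
        exact Complex.ofReal_ne_zero.mpr (ne_of_gt (sub_pos.2 ht1))
      have hinv : HasDerivAt (fun s : ℝ => (((s:ℂ) - (y_c:ℂ))⁻¹))
          (-(((t:ℂ) - (y_c:ℂ)) ^ 2)⁻¹) t := by
        have hc2 := (hasDerivAt_inv hnec).comp (t:ℂ)
          ((hasDerivAt_id ((t:ℂ))).sub_const (y_c:ℂ))
        have := hc2.comp_ofReal
        simpa [Function.comp] using this
      have hlog : HasDerivAt (fun s : ℝ => ((Real.log (s - y_c) : ℝ) : ℂ))
          (((t:ℂ) - (y_c:ℂ))⁻¹) t := by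
        have hne : t - y_c ≠ 0 := ne_of_gt (by linarith)
        have hr' : HasDerivAt (fun s : ℝ => Real.log (s - y_c)) ((t - y_c)⁻¹) t := by
          have := (Real.hasDerivAt_log hne).comp t ((hasDerivAt_id t).sub_const y_c)
          simpa [Function.comp_def] using this
        have h4 := hr'.ofReal_comp
        convert h4 using 1
        push_cast; ring
      exact h1.add ((hinv.mul h2).add (hlog.mul h3))
    -- eventual conditions near y
    have hevcond : ∀ᶠ t : ℝ in nhds y, y_c < t ∧ t - y_c < ρ := by
      have e1 : ∀ᶠ t : ℝ in nhds y, y_c < t :=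
        eventually_gt_nhds hy1
      have e2 : ∀ᶠ t : ℝ in nhds y, t < y_c + ρ :=
        eventually_lt_nhds (by rw [hydef]; linarith)
      filter_upwards [e1, e2] with t h1 h2
      exact ⟨h1, by linarith⟩
    have hlogy : Real.log (y - y_c) = Real.log Y := by
      rw [hydef, add_sub_cancel_left]
    -- second derivative of ψ at y
    have hDDψ : deriv (deriv (fun t : ℝ =>
        (∑' n : ℕ, aa n * ((t : ℂ) - (y_c : ℂ)) ^ n)
          + (Real.log (t - y_c) : ℂ)
              * (∑' n : ℕ, bb n * ((t : ℂ) - (y_c : ℂ)) ^ n))) y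
        = S (sh (sh aa)) z
            + ((-(z ^ 2)⁻¹ * S bb z + z⁻¹ * S (sh bb) z)
              + (z⁻¹ * S (sh bb) z + ((Real.log Y : ℝ) : ℂ) * S (sh (sh bb)) z)) := by
      have hev : deriv (fun t : ℝ =>
          (∑' n : ℕ, aa n * ((t : ℂ) - (y_c : ℂ)) ^ n)
            + (Real.log (t - y_c) : ℂ)
                * (∑' n : ℕ, bb n * ((t : ℂ) - (y_c : ℂ)) ^ n))
          =ᶠ[nhds y] (fun t : ℝ => S (sh aa) ((t:ℂ) - (y_c:ℂ))
            + ((((t:ℂ) - (y_c:ℂ))⁻¹) * S bb ((t:ℂ) - (y_c:ℂ))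
              + ((Real.log (t - y_c) : ℝ) : ℂ) * S (sh bb) ((t:ℂ) - (y_c:ℂ)))) := by
        filter_upwards [hevcond] with t ht
        exact (hψ' t ht.1 ht.2).deriv
      rw [hev.deriv_eq]
      have h5 := (hψ1 y hy1 (by rw [hydef]; simpa using hYρ)).deriv
      rw [hYcz, hlogy] at h5
      exact h5
    -- plug into the Rayleigh equation
    have hEQ := heq y hy1 hy2
    have hU2 : U y - c = S C z := by
      rw [hUeq y (lt_trans hyabs hρR), hYcz]; ring
    have hSa : (∑' n : ℕ, aa n * ((y : ℂ) - (y_c : ℂ)) ^ n) = S aa z := by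
      rw [hYcz]; rfl
    have hSb : (∑' n : ℕ, bb n * ((y : ℂ) - (y_c : ℂ)) ^ n) = S bb z := by
      rw [hYcz]; rfl
    rw [hU2, hddU, hDDψ, hSa, hSb, hlogy] at hEQ
    -- expand S Pc and S Qc
    have hX1u : Rad (up (cp C (sh (sh aa)))) ρ := hX1.up hρpos.le
    have hX2u : Rad (up (cp C (sh bb))) ρ := hX2.up hρpos.le
    have hX4u : Rad (up (cp (sh (sh C)) aa)) ρ := hX4.up hρpos.le
    have hX5u : Rad (up (cp C (sh (sh bb)))) ρ := hX5.up hρpos.le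
    have hX6u : Rad (up (cp (sh (sh C)) bb)) ρ := hX6.up hρpos.le
    have hSPc : S Pc z
        = z * (z * (S C z * S (sh (sh aa)) z))
          + (2 * (z * (S C z * S (sh bb) z)) - S C z * S bb z)
          - z * (z * (S (sh (sh C)) z * S aa z)) := by
      have e1 : S Pc z = S (fun k => up (up (cp C (sh (sh aa)))) k
            + (2 * up (cp C (sh bb)) k - cp C bb k)) z
          - S (up (up (cp (sh (sh C)) aa))) z :=
        S_sub (Rad.add (hX1u.up hρpos.le)
          (Rad.sub (Rad.const_mul 2 hX2u hρpos.le) hX3 hρpos.le) hρpos.le)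
          (hX4u.up hρpos.le) hzle
      have e2 : S (fun k => up (up (cp C (sh (sh aa)))) k
            + (2 * up (cp C (sh bb)) k - cp C bb k)) z
          = S (up (up (cp C (sh (sh aa))))) z
            + S (fun k => 2 * up (cp C (sh bb)) k - cp C bb k) z :=
        S_add (hX1u.up hρpos.le)
          (Rad.sub (Rad.const_mul 2 hX2u hρpos.le) hX3 hρpos.le) hzle
      have e3 : S (fun k => 2 * up (cp C (sh bb)) k - cp C bb k) z
          = S (fun k => 2 * up (cp C (sh bb)) k) z - S (cp C bb) z :=
        S_sub (Rad.const_mul 2 hX2u hρpos.le) hX3 hzle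
      have e4 : S (fun k => 2 * up (cp C (sh bb)) k) z
          = 2 * S (up (cp C (sh bb))) z := S_const_mul _ 2 z
      rw [e1, e2, e3, e4, S_up hX1u hzle, S_up hX1 hzle, S_cp hC hRadF hzle,
        S_up hX2 hzle, S_cp hC hshB hzle, S_cp hC hB hzle,
        S_up hX4u hzle, S_up hX4 hzle, S_cp hRadC2 hA hzle]
    have hSQc : S Qc z
        = z * (z * (S C z * S (sh (sh bb)) z))
          - z * (z * (S (sh (sh C)) z * S bb z)) := by
      have e1 : S Qc z = S (up (up (cp C (sh (sh bb))))) z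
          - S (up (up (cp (sh (sh C)) bb))) z :=
        S_sub (hX5u.up hρpos.le) (hX6u.up hρpos.le) hzle
      rw [e1, S_up hX5u hzle, S_up hX5 hzle, S_cp hC hRadG2 hzle,
        S_up hX6u hzle, S_up hX6 hzle, S_cp hRadC2 hB hzle]
    have h2 : z ^ 2 * ((z * (z * (S C z * S (sh (sh aa)) z))
        + (2 * (z * (S C z * S (sh bb) z)) - S C z * S bb z)
        - z * (z * (S (sh (sh C)) z * S aa z)))
        + (Real.log Y : ℂ) * (z * (z * (S C z * S (sh (sh bb)) z))
          - z * (z * (S (sh (sh C)) z * S bb z)))) = 0 := by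
      field_simp at hEQ
      linear_combination z ^ 2 * hEQ
    rw [hSPc, hSQc]
    exact (mul_eq_zero.1 h2).resolve_left (pow_ne_zero 2 hzne)
  have hzero := extraction hρpos hεpos hερ (m+2) Pc Qc hRadPc hRadQc hkey
  have hPc0 : Pc (m+2) = 0 := hzero.1
  have hPc2 : cp C (sh (sh aa)) m + (2 * cp C (sh bb) (m+1) - cp C bb (m+2))
      - cp (sh (sh C)) aa m = 0 := hPc0
  rw [comb2 cs aa hc0 m, comb3 cs bb hc0 hb0 m, comb1 cs aa m] at hPc2
  have hg1 : m + 2 - 1 = m + 1 := by omega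
  have hg2 : m + 2 - 2 = m := by omega
  rw [hg1, hg2]
  have hcast : ((m + 2 : ℕ) : ℂ) = (m : ℂ) + 2 := by push_cast; ring
  rw [hcast]
  linear_combination hPc2
end
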